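/- arXiv:1909.13320 — 6 statements merged into one kernel-verified Lean document; each statement's English description precedes it below -/
import Mathlib

section
/- For every ε > 0 there exists N ∈ ℕ such that every vector v = (v_1,…,v_n) of integers with v_k ≥ N for all k and density d(v) = ∑_{k=1}^n 1/v_k < 1 − ε admits a Pinwheel schedule. -/
/-!
Round every `v k` down to a period `m * 2 ^ d` with `T ≤ m < 2 * T`; this raises the density
by a factor at most `1 + 1 / T`. Tasks sharing the same `(d, m)` are packed `m` at a time into a
slot, a residue class modulo `2 ^ d` split into `m` residue classes modulo `m * 2 ^ d`. Slots can
be chosen pairwise disjoint as soon as their Kraft sum `∑ 2 ^ (-d)` is at most `1`, by choosing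
them greedily in order of increasing depth. Rounding the number of slots up costs at most one
slot per pair `(d, m)`, and since `v k ≥ 8 * T ^ 3` forces `2 ^ d > 4 * T ^ 2`, these extra slots
add at most `1 / (2 * T)`. For `T ≥ 2 / ε` the Kraft sum stays below `1`, and the schedule plays
at each time the unique task whose residue class contains it.
-/

open Finset Function

namespace Pinwheel

theorem exists_mod_eq_mem_window {P v : ℕ} (hP : 0 < P) (hPv : P ≤ v) {o : ℕ} (ho : o < P)
    (j : ℕ) : ∃ i, j ≤ i ∧ i < j + v ∧ i % P = o := by
  refine ⟨j + (o + (P - j % P)) % P, by omega, ?_, ?_⟩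
  · have := Nat.mod_lt (o + (P - j % P)) hP
    omega
  · have hj := Nat.div_add_mod j P
    have hjP := Nat.mod_lt j hP
    have : j + (o + (P - j % P)) = o + P * (j / P + 1) := by rw [Nat.mul_succ]; omega
    rw [Nat.add_mod_mod, this, Nat.add_mul_mod_self_left, Nat.mod_eq_of_lt ho]

theorem exists_schedule_of_pairwise_disjoint {ι : Type*} [Nonempty ι] (v : ι → ℕ)
    (A : ι → Set ℕ) (hA : Pairwise (Disjoint on A))
    (hwin : ∀ k j, ∃ i ∈ A k, j ≤ i ∧ i < j + v k) :
    ∃ s : ℕ → ι, ∀ k j, ∃ i, j ≤ i ∧ i < j + v k ∧ s i = k := by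
  classical
  refine ⟨fun i => if h : ∃ k, i ∈ A k then h.choose else Classical.arbitrary ι,
    fun k j => ?_⟩
  obtain ⟨i, hik, hji, hij⟩ := hwin k j
  have hex : ∃ k, i ∈ A k := ⟨k, hik⟩
  refine ⟨i, hji, hij, ?_⟩
  dsimp only
  rw [dif_pos hex]
  by_contra hne
  exact Set.disjoint_left.1 (hA hne) hex.choose_spec hik

theorem card_filter_mod_two_pow_eq_le {e D : ℕ} (he : e ≤ D) (c : ℕ) :
    #{x ∈ range (2 ^ D) | x % 2 ^ e = c} ≤ 2 ^ (D - e) := by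
  have hsub : {x ∈ range (2 ^ D) | x % 2 ^ e = c} ⊆
      (range (2 ^ (D - e))).image fun t => c + 2 ^ e * t := by
    intro x hx
    rw [mem_filter, mem_range] at hx
    refine mem_image.2 ⟨x / 2 ^ e, mem_range.2 ?_, by rw [← hx.2, Nat.mod_add_div]⟩
    rw [Nat.div_lt_iff_lt_mul (by positivity), ← pow_add, Nat.sub_add_cancel he]
    exact hx.1
  exact (card_le_card hsub).trans (card_image_le.trans (card_range _).le)

theorem exists_lt_two_pow_mod_ne {α : Type*} (δ r : α → ℕ) (S : Finset α) {D : ℕ}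
    (hδ : ∀ s ∈ S, δ s ≤ D)
    (hS : (1 / 2 : ℝ) ^ D + ∑ s ∈ S, (1 / 2 : ℝ) ^ δ s ≤ 1) :
    ∃ c < 2 ^ D, ∀ s ∈ S, c % 2 ^ δ s ≠ r s := by
  set bad := S.biUnion fun s => {x ∈ range (2 ^ D) | x % 2 ^ δ s = r s}
  have hbad : #bad < #(range (2 ^ D)) := by
    have hreal : ((∑ s ∈ S, 2 ^ (D - δ s) : ℕ) : ℝ) + 1 ≤ 2 ^ D := by
      calc ((∑ s ∈ S, 2 ^ (D - δ s) : ℕ) : ℝ) + 1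
          = 2 ^ D * ((1 / 2) ^ D + ∑ s ∈ S, (1 / 2 : ℝ) ^ δ s) := by
            push_cast
            rw [mul_add, mul_sum, ← mul_pow, mul_one_div_cancel two_ne_zero, one_pow, add_comm]
            congr 1
            refine sum_congr rfl fun s hs => ?_
            rw [pow_sub₀ _ two_ne_zero (hδ s hs), one_div_pow, div_eq_mul_inv, one_mul]
        _ ≤ 2 ^ D := mul_le_of_le_one_right (by positivity) hS
    have hsum : ∑ s ∈ S, 2 ^ (D - δ s) < 2 ^ D := by
      exact_mod_cast (lt_add_one _).trans_le hreal
    calc #bad ≤ ∑ s ∈ S, #{x ∈ range (2 ^ D) | x % 2 ^ δ s = r s} := card_biUnion_le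
      _ ≤ ∑ s ∈ S, 2 ^ (D - δ s) :=
        sum_le_sum fun s hs => card_filter_mod_two_pow_eq_le (hδ s hs) _
      _ < #(range (2 ^ D)) := by rwa [card_range]
  obtain ⟨c, hc, hcbad⟩ := exists_mem_notMem_of_card_lt_card hbad
  refine ⟨c, mem_range.1 hc, fun s hs hcs => hcbad ?_⟩
  exact mem_biUnion.2 ⟨s, hs, mem_filter.2 ⟨hc, hcs⟩⟩

/-- Kraft's inequality for residue classes modulo powers of two. -/
theorem exists_pairwiseDisjoint_dyadic_residues {α : Type*} (δ : α → ℕ) (S : Finset α)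
    (hS : ∑ s ∈ S, (1 / 2 : ℝ) ^ δ s ≤ 1) :
    ∃ r : α → ℕ, (∀ s ∈ S, r s < 2 ^ δ s) ∧
      (S : Set α).PairwiseDisjoint fun s => {x : ℕ | x % 2 ^ δ s = r s} := by
  classical
  induction S using Finset.induction_on_max_value δ with
  | empty => exact ⟨0, by simp, by simp⟩
  | insert a S haS hmax ih =>
    rw [sum_insert haS] at hS
    obtain ⟨r, hr_lt, hr_disj⟩ := ih (by linarith [pow_pos (one_half_pos (α := ℝ)) (δ a)])
    obtain ⟨c, hc_lt, hc⟩ := exists_lt_two_pow_mod_ne δ r S hmax hS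
    have hr : ∀ s ∈ S, update r a c s = r s := fun s hs =>
      update_of_ne (ne_of_mem_of_not_mem hs haS) _ _
    refine ⟨update r a c, ?_, ?_⟩
    · intro s hs
      rcases mem_insert.1 hs with rfl | hs
      · simpa using hc_lt
      · rw [hr s hs]; exact hr_lt s hs
    · rw [coe_insert]
      refine Set.PairwiseDisjoint.insert ?_ fun s hs has => ?_
      · intro s hs t ht hst
        simp only [onFun, hr s hs, hr t ht]
        exact hr_disj hs ht hst
      · simp only [update_self, hr s (mem_coe.1 hs)]
        refine Set.disjoint_left.2 fun x (hxa : x % _ = c) (hxs : x % _ = r s) => hc s hs ?_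
        rw [← hxa, Nat.mod_mod_of_dvd _ (pow_dvd_pow 2 (hmax s hs)), hxs]

theorem exists_injective_on_fibers {ι β : Type*} [Fintype ι] [DecidableEq β] (f : ι → β) :
    ∃ q : ι → ℕ, (∀ k, q k < #{l | f l = f k}) ∧
      ∀ k l, f k = f l → q k = q l → k = l := by
  let _ : LinearOrder ι := LinearOrder.lift' _ (Fintype.equivFin ι).injective
  have hlt : ∀ k l, f k = f l → k < l →
      #{i | f i = f k ∧ i < k} < #{i | f i = f l ∧ i < l} := by
    intro k l hf hkl
    refine card_lt_card ⟨fun i hi => ?_, fun hsub => ?_⟩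
    · simp only [mem_filter, mem_univ, true_and] at hi ⊢
      exact ⟨hi.1.trans hf, hi.2.trans hkl⟩
    · simpa using hsub (by simpa [hf] using hkl : k ∈ ({i | f i = f l ∧ i < l} : Finset ι))
  refine ⟨fun k => #{l | f l = f k ∧ l < k}, fun k => ?_, fun k l hf hq => ?_⟩
  · refine card_lt_card ⟨fun i hi => ?_, fun hsub => ?_⟩
    · simp only [mem_filter, mem_univ, true_and] at hi ⊢
      exact hi.1
    simpa using hsub (by simp : k ∈ ({l | f l = f k} : Finset ι))
  · by_contra hne
    rcases lt_or_gt_of_ne hne with h | h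
    · exact (hlt k l hf h).ne hq
    · exact (hlt l k hf.symm h).ne' hq

/-- A task `k` of rank `q k` among the tasks of class `(d k, m k)` goes to the slot number
`q k / m k` of its class, a residue class modulo `2 ^ d k`; inside it, it gets the residue class
number `q k % m k` modulo `m k * 2 ^ d k`. -/
def slot {ι : Type*} (d m q : ι → ℕ) (k : ι) : (ℕ × ℕ) × ℕ := ((d k, m k), q k / m k)

theorem sum_one_half_pow_slot_le {ι : Type*} [Fintype ι] (d m q : ι → ℕ)
    (hq : ∀ k, q k < #{l | (d l, m l) = (d k, m k)}) :
    ∑ s ∈ univ.image (slot d m q), (1 / 2 : ℝ) ^ s.1.1 ≤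
      ∑ k, 1 / ((m k : ℝ) * 2 ^ d k) +
        ∑ p ∈ univ.image (fun k => (d k, m k)), (1 / 2 : ℝ) ^ p.1 := by
  set g : ι → ℕ × ℕ := fun k => (d k, m k)
  set S := univ.image (slot d m q)
  have hfiber : ∀ p, (#{s ∈ S | s.1 = p} : ℝ) ≤ #{k | g k = p} / p.2 + 1 := by
    intro p
    set c := #{k | g k = p}
    have hsub : {s ∈ S | s.1 = p} ⊆ (range ((c - 1) / p.2 + 1)).image fun j => (p, j) := by
      intro s hs
      obtain ⟨⟨k, -, rfl⟩, hkp⟩ := by simpa only [S, mem_filter, mem_image] using hs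
      change g k = p at hkp
      refine mem_image.2 ⟨q k / m k, mem_range.2 (Nat.lt_succ_of_le ?_), by rw [← hkp]; rfl⟩
      rw [show m k = p.2 from congrArg Prod.snd hkp]
      have hqk : q k < c := by simp only [c, ← hkp]; exact hq k
      exact Nat.div_le_div_right (Nat.le_sub_one_of_lt hqk)
    have hcard := (card_le_card hsub).trans card_image_le
    rw [card_range] at hcard
    calc (#{s ∈ S | s.1 = p} : ℝ) ≤ ((c - 1) / p.2 : ℕ) + 1 := by exact_mod_cast hcard
      _ ≤ ((c - 1 : ℕ) : ℝ) / p.2 + 1 := by gcongr; exact Nat.cast_div_le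
      _ ≤ c / p.2 + 1 := by gcongr; exact_mod_cast Nat.sub_le c 1
  calc ∑ s ∈ S, (1 / 2 : ℝ) ^ s.1.1
      = ∑ p ∈ univ.image g, ∑ s ∈ S with s.1 = p, (1 / 2 : ℝ) ^ s.1.1 :=
        (sum_fiberwise_of_maps_to (fun s hs => by
          obtain ⟨k, -, rfl⟩ := mem_image.1 hs; exact mem_image_of_mem g (mem_univ k)) _).symm
    _ = ∑ p ∈ univ.image g, (#{s ∈ S | s.1 = p} : ℝ) * (1 / 2) ^ p.1 := by
        refine sum_congr rfl fun p _ => ?_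
        rw [← nsmul_eq_mul, ← sum_const]
        exact sum_congr rfl fun s hs => by rw [(mem_filter.1 hs).2]
    _ ≤ ∑ p ∈ univ.image g, ((#{k | g k = p} : ℝ) / p.2 + 1) * (1 / 2) ^ p.1 :=
        sum_le_sum fun p _ => by gcongr; exact hfiber p
    _ = ∑ p ∈ univ.image g, #{k | g k = p} • (1 / ((p.2 : ℝ) * 2 ^ p.1)) +
          ∑ p ∈ univ.image g, (1 / 2 : ℝ) ^ p.1 := by
        rw [← sum_add_distrib]
        refine sum_congr rfl fun p _ => ?_
        rw [nsmul_eq_mul, one_div_pow]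
        field_simp
    _ = ∑ k, 1 / ((m k : ℝ) * 2 ^ d k) + ∑ p ∈ univ.image g, (1 / 2 : ℝ) ^ p.1 := by
        rw [sum_comp (fun p : ℕ × ℕ => 1 / ((p.2 : ℝ) * 2 ^ p.1)) g]

theorem mod_two_pow_eq_of_mod_mul_eq {x m d r i : ℕ} (hr : r < 2 ^ d)
    (h : x % (m * 2 ^ d) = r + i * 2 ^ d) : x % 2 ^ d = r := by
  rw [← Nat.mod_mod_of_dvd x (dvd_mul_left (2 ^ d) m), h, Nat.add_mul_mod_self_right,
    Nat.mod_eq_of_lt hr]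

theorem exists_pairwise_disjoint_residues {ι : Type*} [Fintype ι] (d m : ι → ℕ)
    (hm : ∀ k, 0 < m k)
    (h : ∑ k, 1 / ((m k : ℝ) * 2 ^ d k) +
      ∑ p ∈ univ.image (fun k => (d k, m k)), (1 / 2 : ℝ) ^ p.1 ≤ 1) :
    ∃ o : ι → ℕ, (∀ k, o k < m k * 2 ^ d k) ∧
      Pairwise (Disjoint on fun k => {x : ℕ | x % (m k * 2 ^ d k) = o k}) := by
  obtain ⟨q, hq_lt, hq_inj⟩ := exists_injective_on_fibers fun k => (d k, m k)
  obtain ⟨r, hr_lt, hr_disj⟩ := exists_pairwiseDisjoint_dyadic_residues (fun s => s.1.1)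
    (univ.image (slot d m q)) ((sum_one_half_pow_slot_le d m q hq_lt).trans h)
  have hslot : ∀ k, slot d m q k ∈ univ.image (slot d m q) := fun k =>
    mem_image_of_mem _ (mem_univ k)
  have hr_lt' : ∀ k, r (slot d m q k) < 2 ^ d k := fun k => hr_lt _ (hslot k)
  refine ⟨fun k => r (slot d m q k) + q k % m k * 2 ^ d k, fun k => ?_, fun k l hkl => ?_⟩
  · calc r (slot d m q k) + q k % m k * 2 ^ d k < (q k % m k + 1) * 2 ^ d k := by
          rw [add_one_mul, add_comm]; exact Nat.add_lt_add_left (hr_lt' k) _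
      _ ≤ m k * 2 ^ d k := Nat.mul_le_mul_right _ (Nat.mod_lt _ (hm k))
  refine Set.disjoint_left.2 fun x hxk hxl => ?_
  change x % (m k * 2 ^ d k) = r (slot d m q k) + q k % m k * 2 ^ d k at hxk
  change x % (m l * 2 ^ d l) = r (slot d m q l) + q l % m l * 2 ^ d l at hxl
  by_cases hs : slot d m q k = slot d m q l
  · obtain ⟨hd, hm'⟩ : d k = d l ∧ m k = m l := Prod.ext_iff.1 (congrArg Prod.fst hs)
    have hdiv : q k / m k = q l / m l := congrArg Prod.snd hs
    have hx : x % (m k * 2 ^ d k) = x % (m l * 2 ^ d l) := by rw [hd, hm']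
    rw [hxk, hxl, hs, ← hd, ← hm'] at hx
    have hmod : q k % m k = q l % m k :=
      Nat.eq_of_mul_eq_mul_right (Nat.two_pow_pos _) (Nat.add_left_cancel hx)
    exact hkl (hq_inj k l (Prod.ext hd hm') (Nat.ext_div_modEq (hm' ▸ hdiv) hmod))
  · exact Set.disjoint_left.1 (hr_disj (hslot k) (hslot l) hs)
      (mod_two_pow_eq_of_mod_mul_eq (hr_lt' k) hxk) (mod_two_pow_eq_of_mod_mul_eq (hr_lt' l) hxl)

theorem sum_one_half_pow_le_two_mul {F : Finset ℕ} {c : ℝ} (hc0 : 0 ≤ c)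
    (hc : ∀ d ∈ F, (1 / 2 : ℝ) ^ d ≤ c) : ∑ d ∈ F, (1 / 2 : ℝ) ^ d ≤ 2 * c := by
  rcases F.eq_empty_or_nonempty with rfl | hF
  · simpa using hc0
  set D := F.min' hF
  have hsub : F ⊆ Ico D (F.max' hF + 1) := fun d hd =>
    mem_Ico.2 ⟨F.min'_le d hd, Nat.lt_succ_of_le (F.le_max' d hd)⟩
  calc ∑ d ∈ F, (1 / 2 : ℝ) ^ d ≤ ∑ d ∈ Ico D (F.max' hF + 1), (1 / 2 : ℝ) ^ d :=
        sum_le_sum_of_subset_of_nonneg hsub fun _ _ _ => by positivity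
    _ = (1 / 2) ^ D * ∑ i ∈ range (F.max' hF + 1 - D), (1 / 2 : ℝ) ^ i := by
        rw [sum_Ico_eq_sum_range, mul_sum]
        simp only [pow_add]
    _ ≤ (1 / 2) ^ D * 2 := by gcongr; exact sum_geometric_two_le _
    _ ≤ 2 * c := by rw [mul_comm]; gcongr; exact hc D (F.min'_mem hF)

theorem sum_one_half_pow_fst_le {G : Finset (ℕ × ℕ)} {B : Finset ℕ} {c : ℝ} (hc0 : 0 ≤ c)
    (hB : ∀ p ∈ G, p.2 ∈ B) (hc : ∀ p ∈ G, (1 / 2 : ℝ) ^ p.1 ≤ c) :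
    ∑ p ∈ G, (1 / 2 : ℝ) ^ p.1 ≤ #B * (2 * c) := by
  have hsub : G ⊆ G.image Prod.fst ×ˢ B := fun p hp =>
    mem_product.2 ⟨mem_image_of_mem _ hp, hB p hp⟩
  calc ∑ p ∈ G, (1 / 2 : ℝ) ^ p.1
      ≤ ∑ p ∈ G.image Prod.fst ×ˢ B, (1 / 2 : ℝ) ^ p.1 :=
        sum_le_sum_of_subset_of_nonneg hsub fun _ _ _ => by positivity
    _ = #B * ∑ d ∈ G.image Prod.fst, (1 / 2 : ℝ) ^ d := by
        rw [sum_product, mul_sum]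
        simp only [sum_const, nsmul_eq_mul]
    _ ≤ #B * (2 * c) := by
        gcongr
        refine sum_one_half_pow_le_two_mul hc0 fun d hd => ?_
        obtain ⟨p, hp, rfl⟩ := mem_image.1 hd
        exact hc p hp

/-- `x` is rounded down to `mantissa T x * 2 ^ depth T x`, with `T ≤ mantissa T x < 2 * T`. -/
def depth (T x : ℕ) : ℕ := Nat.log 2 (x / T)

def mantissa (T x : ℕ) : ℕ := x / 2 ^ depth T x

variable {T x : ℕ}

theorem two_pow_depth_mul_le (hT : 0 < T) (hx : T ≤ x) : 2 ^ depth T x * T ≤ x :=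
  (Nat.le_div_iff_mul_le hT).1 (Nat.pow_log_le_self 2 (Nat.div_pos hx hT).ne')

theorem lt_two_pow_depth_succ_mul (hT : 0 < T) : x < 2 ^ (depth T x + 1) * T :=
  (Nat.div_lt_iff_lt_mul hT).1 (Nat.lt_pow_succ_log_self one_lt_two _)

theorem le_mantissa (hT : 0 < T) (hx : T ≤ x) : T ≤ mantissa T x :=
  (Nat.le_div_iff_mul_le (by positivity)).2 (mul_comm T _ ▸ two_pow_depth_mul_le hT hx)

theorem mantissa_pos (hT : 0 < T) (hx : T ≤ x) : 0 < mantissa T x :=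
  hT.trans_le (le_mantissa hT hx)

theorem mantissa_lt (hT : 0 < T) : mantissa T x < 2 * T :=
  (Nat.div_lt_iff_lt_mul (by positivity)).2 <| by
    have := lt_two_pow_depth_succ_mul (x := x) hT
    rwa [pow_succ, mul_assoc, mul_comm] at this

theorem mantissa_mul_le : mantissa T x * 2 ^ depth T x ≤ x := Nat.div_mul_le_self _ _

theorem lt_mantissa_succ_mul : x < (mantissa T x + 1) * 2 ^ depth T x :=
  add_one_mul (mantissa T x) _ ▸ Nat.lt_div_mul_add (Nat.two_pow_pos _)

theorem one_div_mantissa_mul_le (hT : 0 < T) (hx : T ≤ x) :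
    1 / ((mantissa T x : ℝ) * 2 ^ depth T x) ≤ (1 + 1 / T) * (1 / x) := by
  have key : T * x ≤ (T + 1) * (mantissa T x * 2 ^ depth T x) := by
    have h1 := lt_mantissa_succ_mul (T := T) (x := x)
    have h2 := Nat.mul_le_mul_right (2 ^ depth T x) (le_mantissa hT hx)
    nlinarith
  have hm : (0 : ℝ) < mantissa T x := by exact_mod_cast mantissa_pos hT hx
  have hT' : (0 : ℝ) < T := by exact_mod_cast hT
  have hx' : (0 : ℝ) < x := by exact_mod_cast hT.trans_le hx
  rw [one_add_div hT'.ne', div_mul_div_comm, mul_one, div_le_div_iff₀ (by positivity)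
    (by positivity), one_mul]
  exact_mod_cast key

theorem one_half_pow_depth_le (hT : 0 < T) (hx : 8 * T ^ 3 ≤ x) :
    (1 / 2 : ℝ) ^ depth T x ≤ 1 / (4 * T ^ 2) := by
  have h : 4 * T ^ 2 < 2 ^ depth T x := by
    have := lt_two_pow_depth_succ_mul (x := x) hT
    rw [pow_succ] at this
    exact Nat.lt_of_mul_lt_mul_right (a := 2 * T) (by nlinarith)
  rw [one_div_pow]
  exact one_div_le_one_div_of_le (by positivity) (by exact_mod_cast h.le)

theorem le_of_eight_mul_pow_three_le (h : 8 * T ^ 3 ≤ x) : T ≤ x :=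
  ((Nat.le_self_pow three_ne_zero T).trans (Nat.le_mul_of_pos_left _ (by norm_num))).trans h

theorem sum_one_div_mantissa_mul_add_le {ι : Type*} [Fintype ι] (hT : 0 < T) (v : ι → ℕ)
    (hv : ∀ k, 8 * T ^ 3 ≤ v k) :
    ∑ k, 1 / ((mantissa T (v k) : ℝ) * 2 ^ depth T (v k)) +
      ∑ p ∈ univ.image (fun k => (depth T (v k), mantissa T (v k))), (1 / 2 : ℝ) ^ p.1 ≤
      (1 + 1 / T) * ∑ k, 1 / (v k : ℝ) + 1 / (2 * T) := by
  have hvT : ∀ k, T ≤ v k := fun k => le_of_eight_mul_pow_three_le (hv k)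
  gcongr
  · rw [mul_sum]
    exact sum_le_sum fun k _ => one_div_mantissa_mul_le hT (hvT k)
  · calc _ ≤ #(Ico T (2 * T)) * (2 * (1 / (4 * (T : ℝ) ^ 2))) := by
          refine sum_one_half_pow_fst_le (by positivity) (fun p hp => ?_) (fun p hp => ?_) <;>
            obtain ⟨k, -, rfl⟩ := mem_image.1 hp
          · exact mem_Ico.2 ⟨le_mantissa hT (hvT k), mantissa_lt hT⟩
          · exact one_half_pow_depth_le hT (hv k)
      _ = 1 / (2 * T) := by
          rw [Nat.card_Ico, two_mul, Nat.add_sub_cancel]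
          field_simp
          ring

end Pinwheel

open Pinwheel in
/-- **Theorem (Pinwheel schedulability threshold).** For every `ε > 0` there exists `N ∈ ℕ` such
that every (nonempty) vector `v = (v 1, …, v n)` of integers with all entries at least `N` and
density `∑ k, 1 / v k < 1 − ε` admits a Pinwheel schedule: a sequence `s : ℕ → Fin n` such that
for every index `k` every window of `v k` consecutive positions contains an occurrence of `k`. -/
theorem pinwheel_density_threshold (ε : ℝ) (hε : 0 < ε) :
    ∃ N : ℕ, ∀ (n : ℕ), 0 < n → ∀ v : Fin n → ℕ,
      (∀ k, N ≤ v k) → (∑ k, (1 : ℝ) / (v k : ℝ)) < 1 - ε →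
      ∃ s : ℕ → Fin n, ∀ (k : Fin n) (j : ℕ), ∃ i : ℕ, j ≤ i ∧ i < j + v k ∧ s i = k := by
  set T := ⌈2 / ε⌉₊
  have hT : 0 < T := Nat.ceil_pos.2 (by positivity)
  have hTε : 1 / (T : ℝ) ≤ ε / 2 := by
    rw [div_le_div_iff₀ (by positivity) two_pos, one_mul, ← div_le_iff₀' hε]
    exact Nat.le_ceil _
  refine ⟨8 * T ^ 3, fun n hn v hv hdens => ?_⟩
  have hvT : ∀ k, T ≤ v k := fun k => le_of_eight_mul_pow_three_le (hv k)
  have hbudget : (1 + 1 / (T : ℝ)) * ∑ k, 1 / (v k : ℝ) + 1 / (2 * T) ≤ 1 := by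
    have hu : 0 < 1 / (T : ℝ) := by positivity
    have hS : 0 ≤ ∑ k, (1 : ℝ) / v k := by positivity
    rw [show 1 / (2 * (T : ℝ)) = 1 / T / 2 by ring]
    nlinarith [mul_nonneg hu.le (sub_nonneg.2 hdens.le), mul_pos hu hε]
  obtain ⟨o, ho_lt, ho_disj⟩ := exists_pairwise_disjoint_residues (fun k => depth T (v k))
    (fun k => mantissa T (v k)) (fun k => mantissa_pos hT (hvT k))
    ((sum_one_div_mantissa_mul_add_le hT v hv).trans hbudget)
  have : Nonempty (Fin n) := ⟨⟨0, hn⟩⟩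
  refine exists_schedule_of_pairwise_disjoint v _ ho_disj fun k j => ?_
  obtain ⟨i, hji, hij, hi⟩ := exists_mod_eq_mem_window
    (Nat.mul_pos (mantissa_pos hT (hvT k)) (Nat.two_pow_pos _)) mantissa_mul_le (ho_lt k) j
  exact ⟨i, hi, hji, hij⟩
end

section
/- For any finite alphabet Σ and any frame n : Σ → ℕ defined on all of Σ, the set Π_n equals the convex hull of PBA_n, the set of pseudo-binary approximations for n. -/
/-- `p` is a probability distribution on the finite alphabet `α`. -/
def IsProbDist {α : Type*} [Fintype α] (p : α → ℝ) : Prop :=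
  (∀ σ, 0 ≤ p σ) ∧ ∑ σ, p σ = 1

/-- `x` is one of the two binary values `2 ^ (−n σ)`, `2 ^ (−(n σ − 1))` allowed at `σ`. -/
def BinaryVal {α : Type*} (n : α → ℕ) (σ : α) (x : ℝ) : Prop :=
  x = (2 : ℝ) ^ (-(n σ : ℤ)) ∨ x = (2 : ℝ) ^ (-((n σ : ℤ) - 1))

/-- `Π_n`: probability distributions `p` on `α` with
`2 ^ (−n σ) ≤ p σ ≤ 2 ^ (−(n σ − 1))` for every `σ`. -/
def PiN {α : Type*} [Fintype α] (n : α → ℕ) : Set (α → ℝ) :=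
  {p | IsProbDist p ∧
    ∀ σ, (2 : ℝ) ^ (-(n σ : ℤ)) ≤ p σ ∧ p σ ≤ (2 : ℝ) ^ (-((n σ : ℤ) - 1))}

/-- `PBA_n`: pseudo-binary approximations for the frame `n`, i.e. members of `Π_n` for which all
but at most one character takes a binary value. -/
def PBA {α : Type*} [Fintype α] (n : α → ℕ) : Set (α → ℝ) :=
  {p | p ∈ PiN n ∧
    ∀ σ τ : α, ¬ BinaryVal n σ (p σ) → ¬ BinaryVal n τ (p τ) → σ = τ}

/-! `Π_n` is the slice `∑ p = 1` of the box `∏ σ, [2 ^ (-n σ), 2 ^ (-(n σ - 1))]`, so it is convex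
and contains `PBA_n`. Conversely, if `p ∈ Π_n` has two coordinates `σ ≠ τ` strictly inside their
intervals, moving mass from `τ` to `σ`, or from `σ` to `τ`, until one of them reaches an endpoint
gives two points of `Π_n` with fewer such coordinates, and `p` lies on the segment joining them.
Induction on the number of interior coordinates puts `p` in the convex hull of `PBA_n`. -/

open Finset

theorem mem_segment_add_smul_add_smul_neg {𝕜 E : Type*} [Field 𝕜] [LinearOrder 𝕜]
    [IsStrictOrderedRing 𝕜] [AddCommGroup E] [Module 𝕜 E] (p d : E) {a b : 𝕜} (ha : 0 < a)
    (hb : 0 < b) : p ∈ segment 𝕜 (p + a • d) (p + b • -d) := by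
  have hw : b / (a + b) + a / (a + b) = 1 := by field_simp; ring
  refine ⟨b / (a + b), a / (a + b), by positivity, by positivity, hw, ?_⟩
  have hd : b / (a + b) * a - a / (a + b) * b = 0 := by ring
  rw [smul_add, smul_add, add_add_add_comm, ← add_smul, smul_smul, smul_smul, smul_neg,
    ← sub_eq_add_neg, ← sub_smul, hw, hd, one_smul, zero_smul, add_zero]

section Transfer

variable {α : Type*} [DecidableEq α] {p : α → ℝ} {σ τ : α} {t : ℝ}

def transferMass (p : α → ℝ) (σ τ : α) (t : ℝ) : α → ℝ :=
  p + t • (Pi.single σ 1 - Pi.single τ 1)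

lemma transferMass_apply_left (hστ : σ ≠ τ) : transferMass p σ τ t σ = p σ + t := by
  simp [transferMass, hστ]

lemma transferMass_apply_right (hστ : σ ≠ τ) : transferMass p σ τ t τ = p τ - t := by
  simp [transferMass, hστ.symm, sub_eq_add_neg]

lemma transferMass_apply_of_ne {x : α} (hσ : x ≠ σ) (hτ : x ≠ τ) :
    transferMass p σ τ t x = p x := by
  simp [transferMass, hσ, hτ]

lemma sum_transferMass [Fintype α] : ∑ x, transferMass p σ τ t x = ∑ x, p x := by
  simp [transferMass, sum_add_distrib, sum_sub_distrib, ← mul_sum]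

lemma transferMass_swap :
    transferMass p τ σ t = p + t • -(Pi.single σ 1 - Pi.single τ 1) := by
  rw [transferMass, neg_sub]

lemma transferMass_mem_Icc {l u : α → ℝ} (hp : p ∈ Set.Icc l u) (hστ : σ ≠ τ) (ht : 0 ≤ t)
    (htσ : t ≤ u σ - p σ) (htτ : t ≤ p τ - l τ) : transferMass p σ τ t ∈ Set.Icc l u := by
  have h : ∀ x, l x ≤ transferMass p σ τ t x ∧ transferMass p σ τ t x ≤ u x := by
    intro x
    by_cases hxσ : x = σ
    · subst hxσ
      rw [transferMass_apply_left hστ]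
      exact ⟨by linarith [hp.1 x], by linarith⟩
    by_cases hxτ : x = τ
    · subst hxτ
      rw [transferMass_apply_right hστ]
      exact ⟨by linarith, by linarith [hp.2 x]⟩
    rw [transferMass_apply_of_ne hxσ hxτ]
    exact ⟨hp.1 x, hp.2 x⟩
  exact ⟨fun x => (h x).1, fun x => (h x).2⟩

end Transfer

section BoxSlice

variable {α : Type*} [Fintype α]

def boxSlice (l u : α → ℝ) (s : ℝ) : Set (α → ℝ) :=
  Set.Icc l u ∩ {p | ∑ σ, p σ = s}

noncomputable def freeCoords (l u p : α → ℝ) : Finset α :=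
  univ.filter fun σ => p σ ∈ Set.Ioo (l σ) (u σ)

@[simp]
lemma mem_freeCoords {l u p : α → ℝ} {σ : α} :
    σ ∈ freeCoords l u p ↔ p σ ∈ Set.Ioo (l σ) (u σ) := by
  simp [freeCoords]

lemma convex_boxSlice (l u : α → ℝ) (s : ℝ) : Convex ℝ (boxSlice l u s) :=
  (convex_Icc l u).inter <|
    convex_hyperplane ⟨fun _ _ => sum_add_distrib, fun _ _ => (mul_sum ..).symm⟩ s

variable {l u p : α → ℝ} {σ τ : α}

lemma freeCoords_transferMass_subset [DecidableEq α] {t : ℝ} (hσ : σ ∈ freeCoords l u p)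
    (hτ : τ ∈ freeCoords l u p) : freeCoords l u (transferMass p σ τ t) ⊆ freeCoords l u p := by
  intro x hx
  by_cases hxσ : x = σ
  · exact hxσ ▸ hσ
  by_cases hxτ : x = τ
  · exact hxτ ▸ hτ
  simpa [transferMass_apply_of_ne hxσ hxτ] using hx

/-- Transferring as much mass as the bounds allow pushes `σ` or `τ` onto the boundary. -/
lemma exists_transferMass_mem_boxSlice [DecidableEq α] {s : ℝ} (hp : p ∈ boxSlice l u s)
    (hστ : σ ≠ τ) (hσ : σ ∈ freeCoords l u p) (hτ : τ ∈ freeCoords l u p) :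
    ∃ t > 0, transferMass p σ τ t ∈ boxSlice l u s ∧
      freeCoords l u (transferMass p σ τ t) ⊂ freeCoords l u p := by
  have hσ' := mem_freeCoords.mp hσ
  have hτ' := mem_freeCoords.mp hτ
  set t := min (u σ - p σ) (p τ - l τ) with ht
  have htpos : 0 < t := lt_min (by linarith [hσ'.2]) (by linarith [hτ'.1])
  refine ⟨t, htpos, ⟨transferMass_mem_Icc hp.1 hστ htpos.le (min_le_left ..) (min_le_right ..),
    sum_transferMass.trans hp.2⟩,
    (ssubset_iff_of_subset (freeCoords_transferMass_subset hσ hτ)).mpr ?_⟩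
  rcases min_choice (u σ - p σ) (p τ - l τ) with h | h
  · refine ⟨σ, hσ, fun hq => ?_⟩
    have := (mem_freeCoords.mp hq).2
    rw [transferMass_apply_left hστ, ht, h] at this
    linarith
  · refine ⟨τ, hτ, fun hq => ?_⟩
    have := (mem_freeCoords.mp hq).1
    rw [transferMass_apply_right hστ, ht, h] at this
    linarith

theorem boxSlice_subset_convexHull (l u : α → ℝ) (s : ℝ) :
    boxSlice l u s ⊆ convexHull ℝ {p ∈ boxSlice l u s | #(freeCoords l u p) ≤ 1} := by
  classical
  intro p hp
  induction hk : #(freeCoords l u p) using Nat.strong_induction_on generalizing p with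
  | _ k ih =>
  rcases le_or_gt k 1 with h1 | h1
  · exact subset_convexHull ℝ _ ⟨hp, hk ▸ h1⟩
  obtain ⟨σ, hσ, τ, hτ, hστ⟩ := one_lt_card.mp (hk ▸ h1)
  obtain ⟨a, ha, hq, hqF⟩ := exists_transferMass_mem_boxSlice hp hστ hσ hτ
  obtain ⟨b, hb, hr, hrF⟩ := exists_transferMass_mem_boxSlice hp hστ.symm hτ hσ
  have hq' := ih _ (hk ▸ card_lt_card hqF) hq rfl
  have hr' := ih _ (hk ▸ card_lt_card hrF) hr rfl
  rw [transferMass_swap] at hr'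
  exact (convex_convexHull ℝ _).segment_subset hq' hr'
    (mem_segment_add_smul_add_smul_neg p _ ha hb)

end BoxSlice

section Frame

variable {α : Type*} [Fintype α]

noncomputable def frameLower (n : α → ℕ) (σ : α) : ℝ := 2 ^ (-(n σ : ℤ))

noncomputable def frameUpper (n : α → ℕ) (σ : α) : ℝ := 2 ^ (-((n σ : ℤ) - 1))

lemma PiN_eq_boxSlice (n : α → ℕ) : PiN n = boxSlice (frameLower n) (frameUpper n) 1 := by
  ext p
  refine ⟨fun ⟨⟨_, hsum⟩, hb⟩ => ⟨⟨fun σ => (hb σ).1, fun σ => (hb σ).2⟩, hsum⟩,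
    fun ⟨⟨hl, hu⟩, hsum⟩ => ⟨⟨fun σ => ?_, hsum⟩, fun σ => ⟨hl σ, hu σ⟩⟩⟩
  exact (zpow_pos two_pos _).le.trans (hl σ)

lemma not_binaryVal_iff_mem_freeCoords {n : α → ℕ} {p : α → ℝ} (hp : p ∈ PiN n) (σ : α) :
    ¬ BinaryVal n σ (p σ) ↔ σ ∈ freeCoords (frameLower n) (frameUpper n) p := by
  rw [mem_freeCoords, Set.mem_Ioo, BinaryVal, frameLower, frameUpper, not_or]
  obtain ⟨hl, hu⟩ := hp.2 σ
  exact ⟨fun ⟨h1, h2⟩ => ⟨hl.lt_of_ne' h1, hu.lt_of_ne h2⟩, fun ⟨h1, h2⟩ => ⟨h1.ne', h2.ne⟩⟩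

lemma mem_PBA_of_card_freeCoords_le_one {n : α → ℕ} {p : α → ℝ} (hp : p ∈ PiN n)
    (h : #(freeCoords (frameLower n) (frameUpper n) p) ≤ 1) : p ∈ PBA n :=
  ⟨hp, fun σ τ hσ hτ => card_le_one.mp h σ ((not_binaryVal_iff_mem_freeCoords hp σ).mp hσ) τ
    ((not_binaryVal_iff_mem_freeCoords hp τ).mp hτ)⟩

end Frame

theorem PiN_eq_convexHull_PBA_general {α : Type*} [Fintype α] (n : α → ℕ) :
    PiN n = convexHull ℝ (PBA n) := by
  have hPi := PiN_eq_boxSlice n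
  refine subset_antisymm ?_ (convexHull_min (fun p hp => hp.1) (hPi ▸ convex_boxSlice _ _ 1))
  refine hPi ▸ (boxSlice_subset_convexHull _ _ 1).trans (convexHull_mono fun p hp => ?_)
  exact mem_PBA_of_card_freeCoords_le_one (hPi ▸ hp.1) hp.2

/-- **Claim.** For any finite alphabet and any frame `n` defined on all of it (with positive
values), `Π_n` is the convex hull of `PBA_n`. -/
theorem PiN_eq_convexHull_PBA {α : Type*} [Fintype α] (n : α → ℕ)
    (hn : ∀ σ, 1 ≤ n σ) :
    PiN n = convexHull ℝ (PBA n) :=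
  PiN_eq_convexHull_PBA_general n
end

section
/- Let f, g : ℕ → ℕ be strictly increasing, and suppose g(n+1) − g(n) ≥ k/l for all n ∈ ℕ, where k, l ∈ ℕ. Then QR_l(f ∘ g) ≤ QR_k(f) · QR_l(g). -/
open scoped ENNReal

/-- The `k`-quasi-regularity of a strictly increasing `f : ℕ → ℕ`:
`QRk k f = ⨆_{q,r ≥ k, n,m} (q/r) · (f(n+r) − f(n)) / (f(m+q) − f(m))`. -/
noncomputable def QRk (k : ℕ) (f : ℕ → ℕ) : ℝ≥0∞ :=
  ⨆ (q : ℕ) (r : ℕ) (_ : k ≤ q) (_ : k ≤ r) (n : ℕ) (m : ℕ),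
    ((q : ℝ≥0∞) / (r : ℝ≥0∞)) *
      (((f (n + r) - f n : ℕ) : ℝ≥0∞) / ((f (m + q) - f m : ℕ) : ℝ≥0∞))

/-- The quasi-regularity of a strictly increasing `f : ℕ → ℕ`:
the supremum of ratios of consecutive gaps. -/
noncomputable def QRfun (f : ℕ → ℕ) : ℝ≥0∞ :=
  ⨆ (n : ℕ) (m : ℕ),
    ((f (n + 1) - f n : ℕ) : ℝ≥0∞) / ((f (m + 1) - f m : ℕ) : ℝ≥0∞)

/-- `f` is well-distributed with density `d`: `|f⁻¹({1,…,n})| / n → d`. -/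
def HasDensityFun (f : ℕ → ℕ) (d : ℝ) : Prop :=
  Filter.Tendsto
    (fun n : ℕ => ({m : ℕ | 1 ≤ f m ∧ f m ≤ n}.ncard : ℝ) / (n : ℝ))
    Filter.atTop (nhds d)

/-- A coloring of `ℕ` with color set `C`: a family of strictly increasing functions `ℕ → ℕ`
such that every natural number is hit exactly once by the whole family. -/
def IsColoring {C : Type*} (f : C → ℕ → ℕ) : Prop :=
  (∀ c, StrictMono (f c)) ∧ ∀ m : ℕ, ∃! ci : C × ℕ, f ci.1 ci.2 = m

/-- **Lemma (composition).** If `f, g : ℕ → ℕ` are strictly increasing and all gaps of `g`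
satisfy `g(n+1) − g(n) ≥ k / l`, then `QR_l(f ∘ g) ≤ QR_k(f) · QR_l(g)`. -/
theorem QRk_comp (f g : ℕ → ℕ) (hf : StrictMono f) (hg : StrictMono g)
    (k l : ℕ) (hk : 1 ≤ k) (hl : 1 ≤ l)
    (hgap : ∀ n : ℕ, (k : ℝ) / (l : ℝ) ≤ ((g (n + 1) - g n : ℕ) : ℝ)) :
    QRk l (f ∘ g) ≤ QRk k f * QRk l g := by
  have hl0 : (0 : ℝ) < l := by exact_mod_cast hl
  have key : ∀ n r : ℕ, l ≤ r → k ≤ g (n + r) - g n := by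
    intro n r hr
    have hsum : ∀ s : ℕ, (k : ℝ) * s / l ≤ ((g (n + s) - g n : ℕ) : ℝ) := by
      intro s
      induction s with
      | zero => simp
      | succ s ih =>
        have hm1 : g n ≤ g (n + s) := hg.monotone (Nat.le_add_right _ _)
        have hm2 : g (n + s) ≤ g (n + s + 1) := hg.monotone (by omega)
        have h1 : (g (n + (s + 1)) - g n : ℕ) =
            (g (n + s) - g n) + (g (n + s + 1) - g (n + s)) := by
          have : n + (s + 1) = n + s + 1 := by omega
          rw [this]; omega
        rw [h1]
        push_cast
        have := hgap (n + s)
        have hk' : (k : ℝ) * (s + 1) / l = k * s / l + k / l := by ring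
        rw [hk']
        linarith
    have h2 : (k : ℝ) ≤ ((g (n + r) - g n : ℕ) : ℝ) := by
      have := hsum r
      have hrr : (l : ℝ) ≤ r := by exact_mod_cast hr
      have : (k : ℝ) * l / l ≤ (k : ℝ) * r / l := by
        gcongr
      rw [mul_div_assoc, div_self hl0.ne', mul_one] at this
      linarith [hsum r]
    exact_mod_cast h2
  refine iSup_le fun q => iSup_le fun r => iSup_le fun hq => iSup_le fun hr =>
    iSup_le fun n => iSup_le fun m => ?_
  set R : ℕ := g (n + r) - g n with hR
  set Q : ℕ := g (m + q) - g m with hQ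
  have hgn : g n ≤ g (n + r) := hg.monotone (Nat.le_add_right _ _)
  have hgm : g m ≤ g (m + q) := hg.monotone (Nat.le_add_right _ _)
  have hgnR : g n + R = g (n + r) := by omega
  have hgmQ : g m + Q = g (m + q) := by omega
  have hkR : k ≤ R := key n r hr
  have hkQ : k ≤ Q := key m q hq
  have hR0 : (R : ℝ≥0∞) ≠ 0 := by
    simp only [ne_eq, Nat.cast_eq_zero]; omega
  have hQ0 : (Q : ℝ≥0∞) ≠ 0 := by
    simp only [ne_eq, Nat.cast_eq_zero]; omega
  have hRt : (R : ℝ≥0∞) ≠ ⊤ := ENNReal.natCast_ne_top R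
  have hQt : (Q : ℝ≥0∞) ≠ ⊤ := ENNReal.natCast_ne_top Q
  set AE : ℝ≥0∞ := ((f (g (n + r)) - f (g n) : ℕ) : ℝ≥0∞)
  set BE : ℝ≥0∞ := ((f (g (m + q)) - f (g m) : ℕ) : ℝ≥0∞)
  have hX : ((Q : ℝ≥0∞) / (R : ℝ≥0∞)) * (AE / BE) ≤ QRk k f := by
    refine le_iSup_of_le Q (le_iSup_of_le R (le_iSup_of_le hkQ (le_iSup_of_le hkR
      (le_iSup_of_le (g n) (le_iSup_of_le (g m) ?_)))))
    rw [hgnR, hgmQ]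
  have hY : ((q : ℝ≥0∞) / (r : ℝ≥0∞)) * ((R : ℝ≥0∞) / (Q : ℝ≥0∞)) ≤ QRk l g := by
    refine le_iSup_of_le q (le_iSup_of_le r (le_iSup_of_le hq (le_iSup_of_le hr
      (le_iSup_of_le n (le_iSup_of_le m ?_)))))
    rfl
  have hone : ((Q : ℝ≥0∞) / (R : ℝ≥0∞)) * ((R : ℝ≥0∞) / (Q : ℝ≥0∞)) = 1 := by
    rw [div_eq_mul_inv, div_eq_mul_inv,
      show (Q : ℝ≥0∞) * (R : ℝ≥0∞)⁻¹ * ((R : ℝ≥0∞) * (Q : ℝ≥0∞)⁻¹) =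
        ((Q : ℝ≥0∞) * (Q : ℝ≥0∞)⁻¹) * ((R : ℝ≥0∞) * (R : ℝ≥0∞)⁻¹) by ring,
      ENNReal.mul_inv_cancel hQ0 hQt, ENNReal.mul_inv_cancel hR0 hRt, mul_one]
  have heq : ((q : ℝ≥0∞) / (r : ℝ≥0∞)) * (AE / BE) =
      (((Q : ℝ≥0∞) / (R : ℝ≥0∞)) * (AE / BE)) *
        (((q : ℝ≥0∞) / (r : ℝ≥0∞)) * ((R : ℝ≥0∞) / (Q : ℝ≥0∞))) := by
    rw [show (((Q : ℝ≥0∞) / (R : ℝ≥0∞)) * (AE / BE)) *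
        (((q : ℝ≥0∞) / (r : ℝ≥0∞)) * ((R : ℝ≥0∞) / (Q : ℝ≥0∞))) =
        (((q : ℝ≥0∞) / (r : ℝ≥0∞)) * (AE / BE)) *
          (((Q : ℝ≥0∞) / (R : ℝ≥0∞)) * ((R : ℝ≥0∞) / (Q : ℝ≥0∞))) by ring,
      hone, mul_one]
  calc ((q : ℝ≥0∞) / (r : ℝ≥0∞)) * (AE / BE) = _ := heq
    _ ≤ QRk k f * QRk l g := mul_le_mul' hX hY
end

section
/- For any countable alphabet Σ and any probability distribution p on Σ, there exists a sequence s : ℕ → Σ such that s has density p and for all M, N ∈ ℕ and all σ ∈ Σ, | |{i : M ≤ i < M+N, s(i) = σ}|/N − p(σ) | < 2/N. -/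
/-!
Tijdeman's chairman assignment, scheduled earliest deadline first. At step `m`, with `c k`
occurrences of `k` so far, a letter is eligible if `c k < (m + 1) p k`; one exists because the
counts sum to `m`. The `(c k + 1)`-st occurrence of `k` is due at the least `d` with
`c k + 1 < d p k`, and we place an eligible letter that is due first. Eligibility gives the upper
quota `occ n k < n p k + 1`. For the lower quota `n p k - 1 ≤ occ n k`, suppose `k₀` is overdue
at `n`, and let `[t, n)` be the maximal run of steps ending at `n` at each of which a letter
overdue at `n` was placed. Since step `t - 1` placed a letter that is not overdue, no eligible
letter was overdue then, so every letter overdue at `n` already occurred `t p k` times by time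
`t`. Hence each letter fills at most `(n - t) p k` slots of the run, and `k₀` fewer than
`(n - t) p k₀ - 1`; summing over the letters gives `n - t + 1 < n - t`. Both quotas together
bound the count in every window of length `N` to within `2` of `N p k`.
-/

def HasDensity {α : Type*} (s : ℕ → α) (p : α → ℝ) : Prop :=
  ∀ σ : α, Filter.Tendsto
    (fun n : ℕ => ({i : ℕ | i < n ∧ s i = σ}.ncard : ℝ) / (n : ℝ))
    Filter.atTop (nhds (p σ))

open Filter
open scoped Classical

lemma Nat.exists_maximal_run_ending_at (P : ℕ → Prop) (n : ℕ) :
    ∃ t ≤ n, (∀ u, t ≤ u → u < n → P u) ∧ ∀ u, u + 1 = t → ¬ P u := by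
  induction n with
  | zero => exact ⟨0, le_rfl, fun u _ hu => by omega, fun u hu => by omega⟩
  | succ n ih =>
    by_cases hn : P n
    · obtain ⟨t, htn, hrun, hstart⟩ := ih
      refine ⟨t, by omega, fun u htu hun => ?_, hstart⟩
      rcases Nat.lt_succ_iff_lt_or_eq.mp hun with hun | rfl
      exacts [hrun u htu hun, hn]
    · exact ⟨n + 1, le_rfl, fun u hu hun => by omega, fun u hu => by rwa [Nat.succ_inj.mp hu]⟩

namespace EarliestDeadlineFirst

variable {α : Type*}

noncomputable def occ (s : ℕ → α) (n : ℕ) (k : α) : ℕ := Nat.count (s · = k) n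

lemma occ_succ (s : ℕ → α) (n : ℕ) (k : α) :
    occ s (n + 1) k = occ s n k + if s n = k then 1 else 0 :=
  Nat.count_succ _ n

lemma occ_mono (s : ℕ → α) {m n : ℕ} (h : m ≤ n) (k : α) : occ s m k ≤ occ s n k :=
  Nat.count_monotone _ h

lemma hasSum_occ (s : ℕ → α) (n : ℕ) : HasSum (fun k => (occ s n k : ℝ)) n := by
  induction n with
  | zero => simp [occ, hasSum_zero]
  | succ n ih =>
    simpa [occ_succ, eq_comm] using ih.add (hasSum_ite_eq (s n) (1 : ℝ))

lemma ncard_prefix_eq_occ (s : ℕ → α) (n : ℕ) (k : α) :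
    {i | i < n ∧ s i = k}.ncard = occ s n k := by
  rw [occ, Nat.count_eq_card_filter_range, ← Set.ncard_coe_finset]
  congr 1
  ext
  simp

lemma ncard_window_eq_occ_sub (s : ℕ → α) (M N : ℕ) (k : α) :
    {i | M ≤ i ∧ i < M + N ∧ s i = k}.ncard = occ s (M + N) k - occ s M k := by
  have hsub : {i | i < M ∧ s i = k} ⊆ {i | i < M + N ∧ s i = k} :=
    fun i hi => ⟨hi.1.trans_le (M.le_add_right N), hi.2⟩
  have hwin : {i | M ≤ i ∧ i < M + N ∧ s i = k} =
      {i | i < M + N ∧ s i = k} \ {i | i < M ∧ s i = k} := by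
    ext i
    simp only [Set.mem_sdiff, Set.mem_ofPred_eq]
    grind
  rw [hwin, Set.ncard_sdiff hsub ((Set.finite_lt_nat M).subset fun i hi => hi.1),
    ncard_prefix_eq_occ, ncard_prefix_eq_occ]

variable (p : α → ℝ)

/-- The least `d` with `c + 1 < d * p k`, when `p k > 0`. -/
noncomputable def deadline (k : α) (c : ℕ) : ℕ := ⌊((c : ℝ) + 1) / p k⌋₊ + 1

def Overdue (n : ℕ) (k : α) (c : ℕ) : Prop := (c : ℝ) + 1 < n * p k

def Eligible (m : ℕ) (c : α → ℕ) (k : α) : Prop := (c k : ℝ) < (m + 1) * p k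

structure IsEDF (s : ℕ → α) : Prop where
  eligible : ∀ m, Eligible p m (occ s m) (s m)
  deadline_le : ∀ m k, Eligible p m (occ s m) k →
    deadline p (s m) (occ s m (s m)) ≤ deadline p k (occ s m k)

variable {p}

lemma deadline_le_iff {k : α} (hk : 0 < p k) (c n : ℕ) :
    deadline p k c ≤ n ↔ Overdue p n k c := by
  rw [deadline, Overdue, Nat.add_one_le_iff, Nat.floor_lt (by positivity), div_lt_iff₀ hk]

lemma Eligible.pos {m : ℕ} {c : α → ℕ} {k : α} (h : Eligible p m c k) : 0 < p k :=
  pos_of_mul_pos_right ((Nat.cast_nonneg _).trans_lt h) (by positivity)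

lemma exists_eligible (hp1 : HasSum p 1) {m : ℕ} {c : α → ℕ}
    (hc : HasSum (fun k => (c k : ℝ)) m) : ∃ k, Eligible p m c k := by
  by_contra! h
  simp only [Eligible, not_lt] at h
  have := hasSum_le h (hp1.mul_left ((m : ℝ) + 1)) hc
  linarith

lemma occ_lt_mul_add_one (hp0 : ∀ k, 0 ≤ p k) {s : ℕ → α}
    (hs : ∀ m, Eligible p m (occ s m) (s m)) (n : ℕ) (k : α) :
    (occ s n k : ℝ) < n * p k + 1 := by
  induction n with
  | zero => simp [occ]
  | succ n ih =>
    rw [occ_succ]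
    split_ifs with h
    · have := hs n
      rw [h, Eligible] at this
      push_cast
      linarith
    · push_cast
      linarith [hp0 k]

section LowerQuota

variable {s : ℕ → α} {n : ℕ}

lemma occ_eq_or_lt_of_overdue_run {t : ℕ} (k : α) {t' : ℕ} (htt' : t ≤ t')
    (hrun : ∀ u, t ≤ u → u < t' → Overdue p n (s u) (occ s u (s u))) :
    occ s t' k = occ s t k ∨ (occ s t' k : ℝ) < n * p k := by
  induction t', htt' using Nat.le_induction with
  | base => exact Or.inl rfl
  | succ t' htt' ih =>
    rw [occ_succ]
    split_ifs with h
    · have := hrun t' htt' t'.lt_succ_self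
      rw [h, Overdue] at this
      push_cast
      exact Or.inr this
    · simpa using ih fun u htu hut' => hrun u htu (hut'.trans t'.lt_succ_self)

lemma IsEDF.not_overdue_of_eligible (hs : IsEDF p s) {m : ℕ}
    (hm : ¬ Overdue p n (s m) (occ s m (s m))) {k : α} (hk : Eligible p m (occ s m) k) :
    ¬ Overdue p n k (occ s m k) := by
  rw [← deadline_le_iff hk.pos]
  rw [← deadline_le_iff (hs.eligible m).pos] at hm
  exact fun h => hm ((hs.deadline_le m k hk).trans h)

lemma IsEDF.mul_le_occ_of_overdue (hs : IsEDF p s) {t : ℕ}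
    (hstart : ∀ u, u + 1 = t → ¬ Overdue p n (s u) (occ s u (s u))) {k : α}
    (hk : Overdue p n k (occ s t k)) : t * p k ≤ occ s t k := by
  rcases t with _ | u
  · simp
  by_contra! h
  have hmono : (occ s u k : ℝ) ≤ occ s (u + 1) k := by exact_mod_cast occ_mono s u.le_succ k
  have helig : Eligible p u (occ s u) k := by
    rw [Eligible]
    push_cast at h
    linarith
  refine hs.not_overdue_of_eligible (hstart u rfl) helig ?_
  rw [Overdue] at hk ⊢
  linarith

variable {t : ℕ} (hs : IsEDF p s) (htn : t ≤ n)
  (hstart : ∀ u, u + 1 = t → ¬ Overdue p n (s u) (occ s u (s u)))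
include hs htn hstart

lemma IsEDF.occ_sub_occ_add_one_lt {k : α} (hk : Overdue p n k (occ s n k)) :
    (occ s n k : ℝ) - occ s t k + 1 < (n - t) * p k := by
  have hmono : (occ s t k : ℝ) ≤ occ s n k := by exact_mod_cast occ_mono s htn k
  have hover : Overdue p n k (occ s t k) := by
    rw [Overdue] at hk ⊢
    linarith
  rw [Overdue] at hk
  linarith [hs.mul_le_occ_of_overdue hstart hover]

lemma IsEDF.occ_sub_occ_le (hp0 : ∀ k, 0 ≤ p k)
    (hrun : ∀ u, t ≤ u → u < n → Overdue p n (s u) (occ s u (s u))) (k : α) :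
    (occ s n k : ℝ) - occ s t k ≤ (n - t) * p k := by
  have htn' : (t : ℝ) ≤ n := by exact_mod_cast htn
  rcases (occ_mono s htn k).eq_or_lt with heq | hlt
  · rw [heq, sub_self]
    exact mul_nonneg (by linarith) (hp0 k)
  rcases occ_eq_or_lt_of_overdue_run k htn hrun with heq | hlt'
  · omega
  have hover : Overdue p n k (occ s t k) := by
    rw [Overdue]
    have : (occ s t k : ℝ) + 1 ≤ occ s n k := by exact_mod_cast hlt
    linarith
  linarith [hs.mul_le_occ_of_overdue hstart hover]

end LowerQuota

lemma IsEDF.mul_sub_one_le_occ {s : ℕ → α} (hs : IsEDF p s) (hp0 : ∀ k, 0 ≤ p k)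
    (hp1 : HasSum p 1) (n : ℕ) (k₀ : α) : n * p k₀ - 1 ≤ occ s n k₀ := by
  by_contra! hk₀
  replace hk₀ : Overdue p n k₀ (occ s n k₀) := by rw [Overdue]; linarith
  obtain ⟨t, htn, hrun, hstart⟩ :=
    Nat.exists_maximal_run_ending_at (fun u => Overdue p n (s u) (occ s u (s u))) n
  have hle : ∀ k,
      (occ s n k : ℝ) - occ s t k + (if k = k₀ then 1 else 0) ≤ (n - t) * p k := by
    intro k
    split_ifs with h
    · exact (h ▸ hs.occ_sub_occ_add_one_lt htn hstart hk₀).le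
    · simpa using hs.occ_sub_occ_le htn hstart hp0 hrun k
  have hlt := hasSum_lt (i := k₀) hle (by simpa using hs.occ_sub_occ_add_one_lt htn hstart hk₀)
    (((hasSum_occ s n).sub (hasSum_occ s t)).add (hasSum_ite_eq k₀ 1)) (hp1.mul_left _)
  linarith

section Construction

variable [Nonempty α] (p)

noncomputable def pick (m : ℕ) (c : α → ℕ) : α :=
  if h : ∃ k, Eligible p m c k then
    Function.argminOn (fun k => deadline p k (c k)) {k | Eligible p m c k} h
  else Classical.arbitrary α

noncomputable def counts : ℕ → α → ℕ
  | 0 => 0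
  | m + 1 => counts m + Pi.single (pick p m (counts m)) 1

noncomputable def schedule (m : ℕ) : α := pick p m (counts p m)

lemma counts_eq_occ (m : ℕ) : counts p m = occ (schedule p) m := by
  induction m with
  | zero => ext; simp [counts, occ]
  | succ m ih =>
    ext k
    rw [counts, occ_succ, ← ih, Pi.add_apply, Pi.single_apply, schedule]
    exact congrArg _ (if_congr eq_comm rfl rfl)

variable {p}

lemma pick_spec {m : ℕ} {c : α → ℕ} (h : ∃ k, Eligible p m c k) :
    Eligible p m c (pick p m c) ∧
      ∀ k, Eligible p m c k →
        deadline p (pick p m c) (c (pick p m c)) ≤ deadline p k (c k) := by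
  rw [pick, dif_pos h]
  exact ⟨Function.argminOn_mem _ _ h,
    fun k hk => Function.argminOn_le (fun k => deadline p k (c k)) _ hk⟩

lemma isEDF_schedule (hp1 : HasSum p 1) : IsEDF p (schedule p) := by
  have hspec m := pick_spec (exists_eligible hp1 (hasSum_occ (schedule p) m))
  have hpick m : schedule p m = pick p m (occ (schedule p) m) := by rw [schedule, counts_eq_occ]
  exact ⟨fun m => hpick m ▸ (hspec m).1, fun m => hpick m ▸ (hspec m).2⟩

end Construction

section Discrepancy

variable {s : ℕ → α} (hlo : ∀ n k, n * p k - 1 ≤ occ s n k)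
  (hhi : ∀ n k, occ s n k < n * p k + 1)
include hlo hhi

lemma hasDensity_of_quota : HasDensity s p := by
  intro k
  rw [← tendsto_sub_nhds_zero_iff]
  refine squeeze_zero_norm' ?_ tendsto_one_div_atTop_nhds_zero_nat
  filter_upwards [eventually_gt_atTop 0] with n hn
  have hn' : (0 : ℝ) < n := by exact_mod_cast hn
  rw [ncard_prefix_eq_occ, Real.norm_eq_abs, div_sub' hn'.ne', abs_div, abs_of_pos hn',
    div_le_div_iff_of_pos_right hn', abs_le]
  constructor <;> linarith [hlo n k, hhi n k]

lemma abs_window_sub_lt (M N : ℕ) (k : α) (hN : 0 < N) :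
    |({i | M ≤ i ∧ i < M + N ∧ s i = k}.ncard : ℝ) / N - p k| < 2 / N := by
  have hN' : (0 : ℝ) < N := by exact_mod_cast hN
  rw [ncard_window_eq_occ_sub, Nat.cast_sub (occ_mono s (M.le_add_right N) k),
    div_sub' hN'.ne', abs_div, abs_of_pos hN', div_lt_div_iff_of_pos_right hN', abs_lt]
  have hlo' := hlo (M + N) k
  have hhi' := hhi (M + N) k
  push_cast at hlo' hhi'
  constructor <;> linarith [hlo M k, hhi M k]

end Discrepancy

end EarliestDeadlineFirst

open EarliestDeadlineFirst

theorem exists_low_discrepancy_sequence_general {α : Type*} (p : α → ℝ)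
    (hp0 : ∀ σ, 0 ≤ p σ) (hp1 : HasSum p 1) :
    ∃ s : ℕ → α, HasDensity s p ∧
      ∀ (M N : ℕ), 0 < N → ∀ σ : α,
        |({i : ℕ | M ≤ i ∧ i < M + N ∧ s i = σ}.ncard : ℝ) / (N : ℝ) - p σ|
          < 2 / (N : ℝ) := by
  have : Nonempty α := by
    by_contra! h
    simpa using hp1.unique hasSum_empty
  have hs := isEDF_schedule hp1
  have hlo := hs.mul_sub_one_le_occ hp0 hp1
  have hhi := occ_lt_mul_add_one hp0 hs.eligible
  exact ⟨schedule p, hasDensity_of_quota hlo hhi,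
    fun M N hN σ => abs_window_sub_lt hlo hhi M N σ hN⟩

/-- **Lemma (after Tijdeman).** For any probability distribution `p` on a countable alphabet
there is a sequence `s` with density `p` such that every window of length `N ≥ 1` starting at any
`M` contains each character `σ` with frequency within `2/N` of `p σ`. -/
theorem exists_low_discrepancy_sequence {α : Type*} [Countable α] (p : α → ℝ)
    (hp0 : ∀ σ, 0 ≤ p σ) (hp1 : HasSum p 1) :
    ∃ s : ℕ → α, HasDensity s p ∧
      ∀ (M N : ℕ), 0 < N → ∀ σ : α,
        |({i : ℕ | M ≤ i ∧ i < M + N ∧ s i = σ}.ncard : ℝ) / (N : ℝ) - p σ|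
          < 2 / (N : ℝ) :=
  exists_low_discrepancy_sequence_general p hp0 hp1
end

section
/- Let f : ℕ → ℕ be strictly increasing. Then (1) QR(f) = QR_1(f); and (2) if in addition f is well-distributed with density d(f) > 0 and QR(f) is finite, then for every n ∈ ℕ, f(n+1) − f(n) ≥ 1/(d(f) · QR(f)). -/
open scoped ENNReal

section QRaux
open Finset Filter

private lemma tele (f : ℕ → ℕ) (hf : Monotone f) (n r : ℕ) :
    f (n + r) - f n = ∑ i ∈ Finset.range r, (f (n + i + 1) - f (n + i)) := by
  induction r with
  | zero => simp
  | succ r ih =>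
    rw [Finset.sum_range_succ, ← ih]
    have h1 : f n ≤ f (n + r) := hf (by omega)
    have h2 : f (n + r) ≤ f (n + r + 1) := hf (by omega)
    have : n + (r+1) = n + r + 1 := by ring
    rw [this]; omega

private lemma gap_le (f : ℕ → ℕ) (hf : StrictMono f) (i j : ℕ) :
    ((f (i + 1) - f i : ℕ) : ℝ≥0∞) ≤ QRfun f * ((f (j + 1) - f j : ℕ) : ℝ≥0∞) := by
  have hgap : 1 ≤ f (j + 1) - f j := by have := hf (show j < j + 1 by omega); omega
  have hb0 : ((f (j + 1) - f j : ℕ) : ℝ≥0∞) ≠ 0 := by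
    simp only [ne_eq, Nat.cast_eq_zero]; omega
  have hbt : ((f (j + 1) - f j : ℕ) : ℝ≥0∞) ≠ ⊤ := ENNReal.natCast_ne_top _
  have h : ((f (i + 1) - f i : ℕ) : ℝ≥0∞) / ((f (j + 1) - f j : ℕ) : ℝ≥0∞) ≤ QRfun f :=
    le_iSup₂ (f := fun n m => ((f (n + 1) - f n : ℕ) : ℝ≥0∞) / ((f (m + 1) - f m : ℕ) : ℝ≥0∞)) i j
  exact (ENNReal.div_le_iff hb0 hbt).mp h

private lemma part1 (f : ℕ → ℕ) (hf : StrictMono f) : QRfun f = QRk 1 f := by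
  apply le_antisymm
  · apply iSup₂_le fun n m => ?_
    have h : ((f (n + 1) - f n : ℕ) : ℝ≥0∞) / ((f (m + 1) - f m : ℕ) : ℝ≥0∞) =
        ((1 : ℕ) : ℝ≥0∞) / ((1 : ℕ) : ℝ≥0∞) *
          (((f (n + 1) - f n : ℕ) : ℝ≥0∞) / ((f (m + 1) - f m : ℕ) : ℝ≥0∞)) := by
      simp
    rw [h]
    exact le_iSup_of_le 1 (le_iSup_of_le 1 (le_iSup_of_le le_rfl (le_iSup_of_le le_rfl
      (le_iSup_of_le n (le_iSup_of_le m le_rfl)))))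
  · apply iSup_le fun q => iSup_le fun r => iSup_le fun hq => iSup_le fun hr =>
      iSup_le fun n => iSup_le fun m => ?_
    by_cases htop : QRfun f = ⊤
    · rw [htop]; exact le_top
    set Q := QRfun f with hQdef
    set A := ((f (n + r) - f n : ℕ) : ℝ≥0∞) with hAdef
    set B := ((f (m + q) - f m : ℕ) : ℝ≥0∞) with hBdef
    have hA : A = ∑ i ∈ Finset.range r, ((f (n + i + 1) - f (n + i) : ℕ) : ℝ≥0∞) := by
      rw [hAdef, tele f hf.monotone n r]; push_cast; ring
    have hB : B = ∑ j ∈ Finset.range q, ((f (m + j + 1) - f (m + j) : ℕ) : ℝ≥0∞) := by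
      rw [hBdef, tele f hf.monotone m q]; push_cast; ring
    have hAle : ∀ j, A ≤ (r : ℝ≥0∞) * (Q * ((f (m + j + 1) - f (m + j) : ℕ) : ℝ≥0∞)) := by
      intro j
      rw [hA]
      calc ∑ i ∈ Finset.range r, ((f (n + i + 1) - f (n + i) : ℕ) : ℝ≥0∞)
          ≤ ∑ _i ∈ Finset.range r, Q * ((f (m + j + 1) - f (m + j) : ℕ) : ℝ≥0∞) :=
            Finset.sum_le_sum fun i _ => gap_le f hf (n + i) (m + j)
        _ = (r : ℝ≥0∞) * (Q * ((f (m + j + 1) - f (m + j) : ℕ) : ℝ≥0∞)) := by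
            rw [Finset.sum_const, Finset.card_range, nsmul_eq_mul]
    have key : (q : ℝ≥0∞) * A ≤ (r : ℝ≥0∞) * (Q * B) := by
      calc (q : ℝ≥0∞) * A = ∑ _j ∈ Finset.range q, A := by
            rw [Finset.sum_const, Finset.card_range, nsmul_eq_mul]
        _ ≤ ∑ j ∈ Finset.range q, (r : ℝ≥0∞) * (Q * ((f (m + j + 1) - f (m + j) : ℕ) : ℝ≥0∞)) :=
            Finset.sum_le_sum fun j _ => hAle j
        _ = (r : ℝ≥0∞) * (Q * B) := by
            rw [hB, Finset.mul_sum, Finset.mul_sum]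
    have hr0 : (r : ℝ≥0∞) ≠ 0 := by simp; omega
    have hrt : (r : ℝ≥0∞) ≠ ⊤ := ENNReal.natCast_ne_top _
    have hgapB : 1 ≤ f (m + q) - f m := by have := hf (show m < m + q by omega); omega
    have hB0 : B ≠ 0 := by rw [hBdef]; simp only [ne_eq, Nat.cast_eq_zero]; omega
    have hBt : B ≠ ⊤ := ENNReal.natCast_ne_top _
    have heq : (q : ℝ≥0∞) / (r : ℝ≥0∞) * (A / B) = (q : ℝ≥0∞) * A / (r : ℝ≥0∞) / B := by
      simp [div_eq_mul_inv, mul_comm, mul_assoc, mul_left_comm]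
    rw [heq, ENNReal.div_le_iff hB0 hBt, ENNReal.div_le_iff hr0 hrt]
    calc (q : ℝ≥0∞) * A ≤ (r : ℝ≥0∞) * (Q * B) := key
      _ = Q * B * r := by ring

private lemma count_ge (f : ℕ → ℕ) (hf : StrictMono f) (m N : ℕ) (h : f m ≤ N) :
    (m : ℝ) ≤ (({k : ℕ | 1 ≤ f k ∧ f k ≤ N}.ncard : ℝ)) := by
  have hfin : {k : ℕ | 1 ≤ f k ∧ f k ≤ N}.Finite :=
    (Set.finite_Iic N).subset fun k hk => Set.mem_Iic.mpr (le_trans hf.le_apply hk.2)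
  have hsub : Set.Icc 1 m ⊆ {k : ℕ | 1 ≤ f k ∧ f k ≤ N} := fun k hk =>
    ⟨le_trans hk.1 hf.le_apply, le_trans (hf.monotone hk.2) h⟩
  have := Set.ncard_le_ncard hsub hfin
  have hicc : (Set.Icc 1 m).ncard = m := by
    rw [← Nat.card_coe_set_eq, Nat.card_eq_card_toFinset]
    simp [Nat.card_Icc]
  exact_mod_cast hicc ▸ this

private lemma part2 (f : ℕ → ℕ) (hf : StrictMono f) (d : ℝ) (hd : HasDensityFun f d)
    (hd0 : 0 < d) (hQ : QRfun f ≠ ⊤) (n : ℕ) :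
    1 / (d * (QRfun f).toReal) ≤ ((f (n + 1) - f n : ℕ) : ℝ) := by
  set Q : ℝ := (QRfun f).toReal with hQdef
  set g : ℝ := ((f (n + 1) - f n : ℕ) : ℝ) with hgdef
  have hg1 : (1 : ℝ) ≤ g := by
    have := hf (show n < n + 1 by omega)
    rw [hgdef]; exact_mod_cast by omega
  have hQ1 : (1 : ℝ) ≤ Q := by
    have hone : (1 : ℝ≥0∞) ≤ QRfun f := by
      have h01 : f 0 < f (0 + 1) := hf (by omega)
      have hgap : 1 ≤ f (0 + 1) - f 0 := by omega
      have hb0 : ((f (0 + 1) - f 0 : ℕ) : ℝ≥0∞) ≠ 0 := by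
        simp only [ne_eq, Nat.cast_eq_zero]; omega
      have h := le_iSup₂ (f := fun a b =>
        ((f (a + 1) - f a : ℕ) : ℝ≥0∞) / ((f (b + 1) - f b : ℕ) : ℝ≥0∞)) 0 0
      rwa [ENNReal.div_self hb0 (ENNReal.natCast_ne_top _)] at h
    calc (1 : ℝ) = (1 : ℝ≥0∞).toReal := by simp
      _ ≤ Q := ENNReal.toReal_mono hQ hone
  set G : ℝ := Q * g with hGdef
  have hG0 : 0 < G := by nlinarith
  -- real gap bound
  have hgapR : ∀ m, ((f (m + 1) - f m : ℕ) : ℝ) ≤ G := by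
    intro m
    have h := gap_le f hf m n
    have ht : QRfun f * ((f (n + 1) - f n : ℕ) : ℝ≥0∞) ≠ ⊤ :=
      ENNReal.mul_ne_top hQ (ENNReal.natCast_ne_top _)
    have h2 := ENNReal.toReal_mono ht h
    rw [ENNReal.toReal_mul] at h2
    rw [ENNReal.toReal_natCast, ENNReal.toReal_natCast] at h2
    show ((f (m + 1) - f m : ℕ) : ℝ) ≤ (QRfun f).toReal * ((f (n + 1) - f n : ℕ) : ℝ)
    simpa using h2
  -- f M ≤ f 0 + M * G
  have hfM : ∀ M : ℕ, (f M : ℝ) ≤ (f 0 : ℝ) + M * G := by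
    intro M
    have ht := tele f hf.monotone 0 M
    have hmono : f 0 ≤ f M := hf.monotone (Nat.zero_le M)
    have hcast : (f M : ℝ) = (f 0 : ℝ) + ((f M - f 0 : ℕ) : ℝ) := by
      push_cast [Nat.cast_sub hmono]; ring
    rw [hcast]
    have : ((f M - f 0 : ℕ) : ℝ) ≤ M * G := by
      rw [show f M - f 0 = f (0 + M) - f 0 by norm_num, ht]
      push_cast
      calc ∑ i ∈ Finset.range M, ((f (0 + i + 1) - f (0 + i) : ℕ) : ℝ)
          ≤ ∑ _i ∈ Finset.range M, G := by
            apply Finset.sum_le_sum fun i _ => ?_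
            simpa using hgapR (0 + i)
        _ = M * G := by rw [Finset.sum_const, Finset.card_range, nsmul_eq_mul]
    linarith
  -- 1/G ≤ d
  have hkey : 1 / G ≤ d := by
    set a : ℕ → ℝ := fun N => (((N : ℝ) - f 0) / G - 1) / N with hadef
    have hta : Tendsto a atTop (nhds (1 / G)) := by
      have h : Tendsto (fun N : ℕ => 1 / G - ((f 0 : ℝ) + G) / G * (1 / (N : ℝ))) atTop
          (nhds (1 / G)) := by
        have h1 : Tendsto (fun _ : ℕ => 1 / G) atTop (nhds (1 / G)) := tendsto_const_nhds
        have h2 : Tendsto (fun N : ℕ => ((f 0 : ℝ) + G) / G * (1 / (N : ℝ))) atTop (nhds 0) := by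
          simpa using (tendsto_const_nhds (x := ((f 0 : ℝ) + G) / G) (f := atTop (α := ℕ))).mul
            tendsto_one_div_atTop_nhds_zero_nat
        simpa using h1.sub h2
      apply h.congr'
      filter_upwards [eventually_ge_atTop 1] with N hN
      have hN0 : (N : ℝ) ≠ 0 := by positivity
      rw [hadef]
      field_simp
      ring
    refine le_of_tendsto_of_tendsto hta hd ?_
    filter_upwards [eventually_ge_atTop (f 0 + 1)] with N hN
    have hN0 : (0 : ℝ) < N := by exact_mod_cast (by omega : 0 < N)
    set m : ℕ := ⌊((N : ℝ) - f 0) / G⌋₊ with hmdef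
    have hnn : 0 ≤ ((N : ℝ) - f 0) / G := by
      apply div_nonneg _ hG0.le
      have : (f 0 : ℝ) ≤ N := by exact_mod_cast by omega
      linarith
    have hm1 : (m : ℝ) ≤ ((N : ℝ) - f 0) / G := Nat.floor_le hnn
    have hm2 : ((N : ℝ) - f 0) / G < m + 1 := Nat.lt_floor_add_one _
    have hfm : f m ≤ N := by
      have h1 : (f m : ℝ) ≤ (f 0 : ℝ) + m * G := hfM m
      have h2 : (m : ℝ) * G ≤ (N : ℝ) - f 0 := by
        rw [← le_div_iff₀ hG0] at *
        exact hm1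
      have : (f m : ℝ) ≤ (N : ℝ) := by linarith
      exact_mod_cast this
    have hc := count_ge f hf m N hfm
    calc a N ≤ (m : ℝ) / N := by
          show (((N : ℝ) - f 0) / G - 1) / N ≤ (m : ℝ) / N
          gcongr
          linarith
      _ ≤ ({k : ℕ | 1 ≤ f k ∧ f k ≤ N}.ncard : ℝ) / N := by gcongr
  -- conclude
  rw [div_le_iff₀ (by positivity)]
  rw [div_le_iff₀ hG0] at hkey
  rw [hGdef] at hkey
  nlinarith

end QRaux

/-- **Claim.** For strictly increasing `f : ℕ → ℕ`: (1) `QR(f) = QR₁(f)`; (2) if moreover `f` is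
well-distributed with density `d > 0` and `QR(f)` is finite, then every gap of `f` is at least
`1 / (d · QR(f))`. -/
theorem QRfun_eq_QRk_one_and_minGap (f : ℕ → ℕ) (hf : StrictMono f) :
    QRfun f = QRk 1 f ∧
      ∀ d : ℝ, HasDensityFun f d → 0 < d → QRfun f ≠ ⊤ →
        ∀ n : ℕ, 1 / (d * (QRfun f).toReal) ≤ ((f (n + 1) - f n : ℕ) : ℝ) := by
  exact ⟨part1 f hf, fun d hd hd0 hQ n => part2 f hf d hd hd0 hQ n⟩
end

section
/- For any finite alphabet Σ and any frame n : Σ → ℕ defined on all of Σ, the graph Γ_n on vertex set PBA_n is connected, where p, p' ∈ PBA_n are adjacent if and only if they differ on exactly two characters α and β and both irr(p) and irr(p') lie in {none, α, β}. -/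
/-- Adjacency in the graph `Γ_n` on `PBA_n`: `p` and `q` are both pseudo-binary approximations,
they differ on exactly the two characters `α₀ ≠ β₀`, and both exceptional characters `irr p`,
`irr q` lie in `{none, α₀, β₀}` — equivalently, both `p` and `q` take binary values at every
character outside `{α₀, β₀}`. -/
def GammaAdj {α : Type*} [Fintype α] (n : α → ℕ) (p q : α → ℝ) : Prop :=
  p ∈ PBA n ∧ q ∈ PBA n ∧
    ∃ α₀ β₀ : α, α₀ ≠ β₀ ∧ {σ | p σ ≠ q σ} = {α₀, β₀} ∧
      (∀ σ, σ ≠ α₀ → σ ≠ β₀ → BinaryVal n σ (p σ)) ∧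
      (∀ σ, σ ≠ α₀ → σ ≠ β₀ → BinaryVal n σ (q σ))

/-! Every coordinate of a pseudo-binary approximation lies on the dyadic grid `2 ^ (-N) ℤ`,
`N = max n` (the binary values do, and the irregular coordinate is `1` minus a sum of binary
values), so the `ℓ¹` distance between two vertices is a natural multiple of `2 ^ (-N)` and it
suffices to walk from `p ≠ q` to a vertex strictly closer to `q`.

If `q a < p a`, `p b < q b` and `irr p ∈ {none, a, b}`, shifting mass from `a` to `b` is an edge
that shortens the distance, provided the amount is chosen so that one of the two new values is
binary: one of `q a`, `q b` is binary, and the shift stops when that coordinate reaches it or when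
the other coordinate reaches the end of its interval. Such `a`, `b` exist unless the irregular
coordinate `ρ` of `p` has `p ρ = q ρ`; then a preliminary edge from some `a` with `q a < p a`
into `ρ` does not increase the distance and moves the irregularity off the coordinates where `p`
agrees with `q`. -/

open Finset

section Transfer

variable {ι M : Type*}

lemma Fintype.sum_sub_sum_eq_of_eq_off_pair [Fintype ι] [AddCommGroup M] {f g : ι → M} {a b : ι}
    (hab : a ≠ b) (h : ∀ i, i ≠ a → i ≠ b → f i = g i) :
    ∑ i, f i - ∑ i, g i = (f a - g a) + (f b - g b) := by
  rw [← Finset.sum_sub_distrib]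
  exact Fintype.sum_eq_add a b hab fun i hi => sub_eq_zero.2 (h i hi.1 hi.2)

variable [DecidableEq ι] [AddCommGroup M] {p : ι → M} {a b i : ι} {δ : M}

def transfer (p : ι → M) (a b : ι) (δ : M) : ι → M :=
  Function.update (Function.update p a (p a - δ)) b (p b + δ)

lemma transfer_apply_left (hab : a ≠ b) : transfer p a b δ a = p a - δ := by
  simp [transfer, hab]

lemma transfer_apply_right : transfer p a b δ b = p b + δ := by
  simp [transfer]

lemma transfer_apply_of_ne (ha : i ≠ a) (hb : i ≠ b) : transfer p a b δ i = p i := by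
  simp [transfer, ha, hb]

lemma sum_transfer [Fintype ι] (hab : a ≠ b) : ∑ i, transfer p a b δ i = ∑ i, p i := by
  rw [← sub_eq_zero, Fintype.sum_sub_sum_eq_of_eq_off_pair hab fun i ha hb =>
    transfer_apply_of_ne ha hb, transfer_apply_left hab, transfer_apply_right]
  abel

end Transfer

section L1

variable {ι : Type*} [Fintype ι]

noncomputable def l1Dist (p q : ι → ℝ) : ℝ := ∑ i, |p i - q i|

lemma abs_sub_add_abs_add_le {x y δ : ℝ} (hδ : 0 ≤ δ) (hδx : δ ≤ x) :
    |x - δ| + |y + δ| ≤ |x| + |y| := by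
  rw [abs_of_nonneg (by linarith : 0 ≤ x - δ), abs_of_nonneg (hδ.trans hδx)]
  linarith [abs_add_le y δ, abs_of_nonneg hδ]

lemma abs_sub_add_abs_add_lt {x y δ : ℝ} (hx : 0 < x) (hy : y < 0) (hδ : 0 < δ)
    (h : δ ≤ x ∨ δ ≤ -y) : |x - δ| + |y + δ| < |x| + |y| := by
  rw [abs_of_pos hx, abs_of_neg hy]
  rcases h with h | h <;> cases abs_cases (x - δ) <;> cases abs_cases (y + δ) <;> linarith

variable [DecidableEq ι] {p q : ι → ℝ} {a b : ι} {δ : ℝ}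

lemma l1Dist_transfer_sub (hab : a ≠ b) :
    l1Dist (transfer p a b δ) q - l1Dist p q =
      (|p a - q a - δ| - |p a - q a|) + (|p b - q b + δ| - |p b - q b|) := by
  rw [l1Dist, l1Dist, Fintype.sum_sub_sum_eq_of_eq_off_pair hab fun i ha hb => by
    rw [transfer_apply_of_ne ha hb], transfer_apply_left hab, transfer_apply_right,
    sub_right_comm, add_sub_right_comm]

lemma l1Dist_transfer_le (hab : a ≠ b) (hδ : 0 ≤ δ) (hδa : δ ≤ p a - q a) :
    l1Dist (transfer p a b δ) q ≤ l1Dist p q := by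
  have := l1Dist_transfer_sub (p := p) (q := q) (δ := δ) hab
  have := abs_sub_add_abs_add_le (y := p b - q b) hδ hδa
  linarith

lemma l1Dist_transfer_lt (hab : a ≠ b) (ha : q a < p a) (hb : p b < q b) (hδ : 0 < δ)
    (h : δ ≤ p a - q a ∨ δ ≤ q b - p b) :
    l1Dist (transfer p a b δ) q < l1Dist p q := by
  have := l1Dist_transfer_sub (p := p) (q := q) (δ := δ) hab
  have := abs_sub_add_abs_add_lt (sub_pos.2 ha) (sub_neg.2 hb) hδ (by rwa [neg_sub])
  linarith

end L1

section PBA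

variable {α : Type*} {n : α → ℕ} {p q : α → ℝ} {a b ρ σ : α} {δ : ℝ}

noncomputable def lowVal (n : α → ℕ) (σ : α) : ℝ := (2 : ℝ) ^ (-(n σ : ℤ))

noncomputable def highVal (n : α → ℕ) (σ : α) : ℝ := (2 : ℝ) ^ (-((n σ : ℤ) - 1))

lemma lowVal_pos : 0 < lowVal n σ := zpow_pos two_pos _

variable [Fintype α]

lemma PBA.lowVal_le (hp : p ∈ PBA n) (σ : α) : lowVal n σ ≤ p σ := (hp.1.2 σ).1

lemma PBA.le_highVal (hp : p ∈ PBA n) (σ : α) : p σ ≤ highVal n σ := (hp.1.2 σ).2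

lemma PBA.sum_eq_one (hp : p ∈ PBA n) : ∑ σ, p σ = 1 := hp.1.1.2

lemma PBA.binaryVal_of_ne (hp : p ∈ PBA n) (hρ : ¬ BinaryVal n ρ (p ρ)) (hσ : σ ≠ ρ) :
    BinaryVal n σ (p σ) :=
  by_contra fun h => hσ (hp.2 σ ρ h hρ)

lemma PBA.binaryVal_or_binaryVal (hp : p ∈ PBA n) (hab : a ≠ b) :
    BinaryVal n a (p a) ∨ BinaryVal n b (p b) := by
  by_contra! h
  exact hab (hp.2 a b h.1 h.2)

variable [DecidableEq α]

lemma transfer_mem_PBA (hp : p ∈ PBA n) (hab : a ≠ b)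
    (hbin : ∀ σ, σ ≠ a → σ ≠ b → BinaryVal n σ (p σ))
    (hla : lowVal n a ≤ p a - δ) (hhb : p b + δ ≤ highVal n b) (hδ : 0 ≤ δ)
    (hone : BinaryVal n a (p a - δ) ∨ BinaryVal n b (p b + δ)) :
    transfer p a b δ ∈ PBA n := by
  have hbounds : ∀ σ, lowVal n σ ≤ transfer p a b δ σ ∧ transfer p a b δ σ ≤ highVal n σ := by
    intro σ
    by_cases hσa : σ = a
    · subst hσa
      rw [transfer_apply_left hab]
      exact ⟨hla, by linarith [PBA.le_highVal hp σ]⟩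
    by_cases hσb : σ = b
    · subst hσb
      rw [transfer_apply_right]
      exact ⟨by linarith [PBA.lowVal_le hp σ], hhb⟩
    rw [transfer_apply_of_ne hσa hσb]
    exact hp.1.2 σ
  have hirr : ∀ σ, ¬ BinaryVal n σ (transfer p a b δ σ) → σ = a ∨ σ = b := by
    intro σ hσ
    by_contra! h
    rw [transfer_apply_of_ne h.1 h.2] at hσ
    exact hσ (hbin σ h.1 h.2)
  refine ⟨⟨⟨fun σ => lowVal_pos.le.trans (hbounds σ).1, ?_⟩, hbounds⟩, fun σ τ hσ hτ => ?_⟩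
  · rw [sum_transfer hab, PBA.sum_eq_one hp]
  · rw [← transfer_apply_left hab, ← transfer_apply_right (p := p) (a := a)] at hone
    rcases hirr σ hσ with rfl | rfl <;> rcases hirr τ hτ with rfl | rfl <;> tauto

lemma gammaAdj_transfer (hp : p ∈ PBA n) (hab : a ≠ b)
    (hbin : ∀ σ, σ ≠ a → σ ≠ b → BinaryVal n σ (p σ))
    (hla : lowVal n a ≤ p a - δ) (hhb : p b + δ ≤ highVal n b) (hδ : 0 < δ)
    (hone : BinaryVal n a (p a - δ) ∨ BinaryVal n b (p b + δ)) :
    GammaAdj n p (transfer p a b δ) := by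
  refine ⟨hp, transfer_mem_PBA hp hab hbin hla hhb hδ.le hone, a, b, hab, ?_, hbin,
    fun σ ha hb => by rw [transfer_apply_of_ne ha hb]; exact hbin σ ha hb⟩
  ext σ
  simp only [Set.mem_ofPred_eq, Set.mem_insert_iff, Set.mem_singleton_iff]
  constructor
  · contrapose!
    rintro ⟨ha, hb⟩
    rw [transfer_apply_of_ne ha hb]
  · rintro (rfl | rfl)
    · rw [transfer_apply_left hab]
      linarith
    · rw [transfer_apply_right]
      linarith

end PBA

section Grid

lemma exists_nat_eq_mul_of_mem_zmultiples {K : Type*} [Ring K] [LinearOrder K]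
    [IsStrictOrderedRing K] {u x : K} (hu : 0 < u) (hx : x ∈ AddSubgroup.zmultiples u)
    (hx0 : 0 ≤ x) : ∃ m : ℕ, x = m * u := by
  obtain ⟨k, rfl⟩ := AddSubgroup.mem_zmultiples_iff.1 hx
  rw [zsmul_eq_mul] at hx0 ⊢
  lift k to ℕ using Int.cast_nonneg_iff.1 (nonneg_of_mul_nonneg_left hx0 hu)
  exact ⟨k, by norm_cast⟩

lemma two_zpow_mem_zmultiples {m e : ℤ} (h : m ≤ e) :
    (2 : ℝ) ^ e ∈ AddSubgroup.zmultiples ((2 : ℝ) ^ m) := by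
  obtain ⟨k, rfl⟩ := Int.le.dest h
  refine AddSubgroup.mem_zmultiples_iff.2 ⟨2 ^ k, ?_⟩
  rw [zpow_add₀ two_ne_zero, zsmul_eq_mul, zpow_natCast]
  push_cast
  ring

variable {α : Type*} [Fintype α] {n : α → ℕ} {p q : α → ℝ}

noncomputable def dyadicGrid (n : α → ℕ) : AddSubgroup ℝ :=
  AddSubgroup.zmultiples ((2 : ℝ) ^ (-((univ.sup n : ℕ) : ℤ)))

lemma one_mem_dyadicGrid : (1 : ℝ) ∈ dyadicGrid n := by
  rw [dyadicGrid, ← zpow_zero (2 : ℝ)]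
  exact two_zpow_mem_zmultiples (by omega)

lemma BinaryVal.mem_dyadicGrid {σ : α} {x : ℝ} (hx : BinaryVal n σ x) : x ∈ dyadicGrid n := by
  unfold dyadicGrid
  have : n σ ≤ univ.sup n := le_sup (mem_univ σ)
  rcases hx with rfl | rfl <;> exact two_zpow_mem_zmultiples (by omega)

lemma PBA.apply_mem_dyadicGrid (hp : p ∈ PBA n) (σ : α) : p σ ∈ dyadicGrid n := by
  classical
  by_cases hσ : BinaryVal n σ (p σ)
  · exact hσ.mem_dyadicGrid
  have hsum : p σ = 1 - ∑ τ ∈ univ.erase σ, p τ := by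
    rw [← PBA.sum_eq_one hp, ← add_sum_erase _ _ (mem_univ σ), add_sub_cancel_right]
  rw [hsum]
  refine sub_mem one_mem_dyadicGrid (sum_mem fun τ hτ => ?_)
  exact (PBA.binaryVal_of_ne hp hσ (ne_of_mem_erase hτ)).mem_dyadicGrid

lemma exists_l1Dist_eq_nat_mul (hp : p ∈ PBA n) (hq : q ∈ PBA n) :
    ∃ m : ℕ, l1Dist p q = m * (2 : ℝ) ^ (-((univ.sup n : ℕ) : ℤ)) := by
  refine exists_nat_eq_mul_of_mem_zmultiples (zpow_pos two_pos _) ?_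
    (sum_nonneg fun σ _ => abs_nonneg _)
  exact sum_mem fun σ _ => abs_mem_iff.2
    (sub_mem (PBA.apply_mem_dyadicGrid hp σ) (PBA.apply_mem_dyadicGrid hq σ))

end Grid

section Connectivity

lemma exists_lt_of_sum_eq_of_ne {ι M : Type*} [Fintype ι] [AddCommMonoid M] [LinearOrder M]
    [IsOrderedCancelAddMonoid M] {f g : ι → M} (hsum : ∑ i, f i = ∑ i, g i) (hne : f ≠ g) :
    ∃ i, g i < f i := by
  by_contra! h
  exact hne (funext fun i => (sum_eq_sum_iff_of_le fun i _ => h i).1 hsum i (mem_univ i))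

variable {α : Type*} [Fintype α] {n : α → ℕ} {p q : α → ℝ} {a b ρ : α}

lemma exists_gammaAdj_l1Dist_lt_of_lt_of_lt (hp : p ∈ PBA n) (hq : q ∈ PBA n)
    (ha : q a < p a) (hb : p b < q b) (hbin : ∀ σ, σ ≠ a → σ ≠ b → BinaryVal n σ (p σ)) :
    ∃ p', GammaAdj n p p' ∧ l1Dist p' q < l1Dist p q := by
  classical
  have hab : a ≠ b := by rintro rfl; linarith
  have hqa_lo := PBA.lowVal_le hq a
  have hqb_hi := PBA.le_highVal hq b
  rcases PBA.binaryVal_or_binaryVal hq hab with hqa | hqb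
  · set δ := min (p a - q a) (highVal n b - p b)
    have hδa : δ ≤ p a - q a := min_le_left _ _
    have hδb : δ ≤ highVal n b - p b := min_le_right _ _
    have hδ : 0 < δ := lt_min (by linarith) (by linarith)
    refine ⟨transfer p a b δ, gammaAdj_transfer hp hab hbin (by linarith) (by linarith) hδ ?_,
      l1Dist_transfer_lt hab ha hb hδ (.inl hδa)⟩
    obtain h | h : δ = p a - q a ∨ δ = highVal n b - p b := min_choice _ _
    · left
      rwa [h, sub_sub_cancel]
    · right
      rw [h, add_sub_cancel]
      exact .inr rfl
  · set δ := min (q b - p b) (p a - lowVal n a)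
    have hδb : δ ≤ q b - p b := min_le_left _ _
    have hδa : δ ≤ p a - lowVal n a := min_le_right _ _
    have hδ : 0 < δ := lt_min (by linarith) (by linarith)
    refine ⟨transfer p a b δ, gammaAdj_transfer hp hab hbin (by linarith) (by linarith) hδ ?_,
      l1Dist_transfer_lt hab ha hb hδ (.inr hδb)⟩
    obtain h | h : δ = q b - p b ∨ δ = p a - lowVal n a := min_choice _ _
    · right
      rwa [h, add_sub_cancel]
    · left
      rw [h, sub_sub_cancel]
      exact .inl rfl

lemma exists_gammaAdj_l1Dist_lt (hp : p ∈ PBA n) (hq : q ∈ PBA n) (hpq : p ≠ q)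
    (hirr : ∀ σ, ¬ BinaryVal n σ (p σ) → p σ ≠ q σ) :
    ∃ p', GammaAdj n p p' ∧ l1Dist p' q < l1Dist p q := by
  have hsum : ∑ σ, p σ = ∑ σ, q σ := by rw [PBA.sum_eq_one hp, PBA.sum_eq_one hq]
  obtain ⟨a, ha⟩ := exists_lt_of_sum_eq_of_ne hsum hpq
  obtain ⟨b, hb⟩ := exists_lt_of_sum_eq_of_ne hsum.symm hpq.symm
  by_cases hbin : ∀ σ, BinaryVal n σ (p σ)
  · exact exists_gammaAdj_l1Dist_lt_of_lt_of_lt hp hq ha hb fun σ _ _ => hbin σ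
  push Not at hbin
  obtain ⟨ρ, hρ⟩ := hbin
  rcases (hirr ρ hρ).lt_or_gt with h | h
  · exact exists_gammaAdj_l1Dist_lt_of_lt_of_lt hp hq ha h
      fun σ _ hσ => PBA.binaryVal_of_ne hp hρ hσ
  · exact exists_gammaAdj_l1Dist_lt_of_lt_of_lt hp hq h hb
      fun σ hσ _ => PBA.binaryVal_of_ne hp hρ hσ

lemma exists_gammaAdj_l1Dist_le_of_irr_eq (hp : p ∈ PBA n) (hq : q ∈ PBA n)
    (hρ : ¬ BinaryVal n ρ (p ρ)) (hρq : p ρ = q ρ) (ha : q a < p a) :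
    ∃ p', GammaAdj n p p' ∧ l1Dist p' q ≤ l1Dist p q ∧ p' ≠ q ∧
      ∀ σ, ¬ BinaryVal n σ (p' σ) → p' σ ≠ q σ := by
  classical
  have haρ : a ≠ ρ := by rintro rfl; linarith
  have hqa : BinaryVal n a (q a) := PBA.binaryVal_of_ne hq (hρq ▸ hρ) haρ
  have hρ_lt : p ρ < highVal n ρ := (PBA.le_highVal hp ρ).lt_of_ne fun h => hρ (.inr h)
  have hbin : ∀ σ, σ ≠ a → σ ≠ ρ → BinaryVal n σ (p σ) :=
    fun σ _ hσ => PBA.binaryVal_of_ne hp hρ hσ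
  have hqa_lo := PBA.lowVal_le hq a
  set δ := min (p a - q a) (highVal n ρ - p ρ)
  have hδa : δ ≤ p a - q a := min_le_left _ _
  have hδρ : δ ≤ highVal n ρ - p ρ := min_le_right _ _
  have hδ : 0 < δ := lt_min (by linarith) (by linarith)
  have hone : BinaryVal n a (p a - δ) ∨ BinaryVal n ρ (p ρ + δ) := by
    obtain h | h : δ = p a - q a ∨ δ = highVal n ρ - p ρ := min_choice _ _
    · left
      rwa [h, sub_sub_cancel]
    · right
      rw [h, add_sub_cancel]
      exact .inr rfl
  refine ⟨transfer p a ρ δ, gammaAdj_transfer hp haρ hbin (by linarith) (by linarith) hδ hone,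
    l1Dist_transfer_le haρ hδ.le hδa, fun h => ?_, fun σ hσ hσq => ?_⟩
  · have := congrFun h ρ
    rw [transfer_apply_right] at this
    linarith
  by_cases hσa : σ = a
  · subst hσa
    exact hσ (hσq ▸ hqa)
  by_cases hσρ : σ = ρ
  · subst hσρ
    rw [transfer_apply_right] at hσq
    linarith
  rw [transfer_apply_of_ne hσa hσρ] at hσ
  exact hσ (hbin σ hσa hσρ)

lemma exists_reflTransGen_l1Dist_lt (hp : p ∈ PBA n) (hq : q ∈ PBA n) (hpq : p ≠ q) :
    ∃ p' ∈ PBA n, Relation.ReflTransGen (GammaAdj n) p p' ∧ l1Dist p' q < l1Dist p q := by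
  by_cases hshared : ∃ ρ, ¬ BinaryVal n ρ (p ρ) ∧ p ρ = q ρ
  · obtain ⟨ρ, hρ, hρq⟩ := hshared
    obtain ⟨a, ha⟩ :=
      exists_lt_of_sum_eq_of_ne (by rw [PBA.sum_eq_one hp, PBA.sum_eq_one hq]) hpq
    obtain ⟨p', hadj, hle, hne, hirr⟩ := exists_gammaAdj_l1Dist_le_of_irr_eq hp hq hρ hρq ha
    obtain ⟨p'', hadj', hlt⟩ := exists_gammaAdj_l1Dist_lt hadj.2.1 hq hne hirr
    exact ⟨p'', hadj'.2.1, .head hadj (.single hadj'), hlt.trans_le hle⟩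
  · push Not at hshared
    obtain ⟨p', hadj, hlt⟩ := exists_gammaAdj_l1Dist_lt hp hq hpq hshared
    exact ⟨p', hadj.2.1, .single hadj, hlt⟩

end Connectivity

theorem Gamma_connected_general {α : Type*} [Fintype α] (n : α → ℕ)
    (p q : α → ℝ) (hp : p ∈ PBA n) (hq : q ∈ PBA n) :
    Relation.ReflTransGen (GammaAdj n) p q := by
  obtain ⟨m, hm⟩ := exists_l1Dist_eq_nat_mul hp hq
  induction m using Nat.strong_induction_on generalizing p with
  | _ m ih =>
    by_cases hpq : p = q
    · exact hpq ▸ .refl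
    obtain ⟨p', hp', hpath, hlt⟩ := exists_reflTransGen_l1Dist_lt hp hq hpq
    obtain ⟨m', hm'⟩ := exists_l1Dist_eq_nat_mul hp' hq
    have hm'm : m' < m := by
      rw [hm, hm'] at hlt
      exact_mod_cast lt_of_mul_lt_mul_right hlt (zpow_pos two_pos _).le
    exact hpath.trans (ih m' hm'm p' hp' hm')

/-- **Claim.** The graph `Γ_n` is connected: any two vertices of `PBA_n` are joined by a path. -/
theorem Gamma_connected {α : Type*} [Fintype α] (n : α → ℕ) (hn : ∀ σ, 1 ≤ n σ)
    (p q : α → ℝ) (hp : p ∈ PBA n) (hq : q ∈ PBA n) :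
    Relation.ReflTransGen (GammaAdj n) p q :=
  Gamma_connected_general n p q hp hq
end
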